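/- arXiv:1502.04963 — 13 statements merged into one kernel-verified Lean document; each statement's English description precedes it below -/
import Mathlib

section
/- For every integer k ≥ 2, letting n = 2↑↑(2k+1) + 1, the two-sided colour reduction complexity satisfies C(n,3) = k + 1; equivalently, since log* n = 2k + 2, we have C(n,3) = (log* n)/2. -/
/-- A one-sided colour reduction algorithm from `n` colours to `c` colours running in
`t` rounds: a function `B : [n]^(t+1) → [c]` such that for any sequence
`x_0, …, x_(t+1)` with `x_i ≠ x_(i+1)` for all `i`, the outputs on the two
overlapping windows differ. -/
def IsOneSided (n c t : ℕ) (B : (Fin (t + 1) → Fin n) → Fin c) : Prop :=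
  ∀ x : Fin (t + 1 + 1) → Fin n,
    (∀ i : Fin (t + 1), x i.castSucc ≠ x i.succ) →
      B (fun i => x i.castSucc) ≠ B (fun i => x i.succ)

/-- `T n c` is the least number of rounds of a one-sided colour reduction algorithm
from `n` colours to `c` colours. -/
noncomputable def T (n c : ℕ) : ℕ := sInf {t | ∃ B, IsOneSided n c t B}

/-- A two-sided colour reduction algorithm from `n` colours to `c` colours running in
`t` rounds: a function `A : [n]^(2t+1) → [c]` such that for any sequence
`x_0, …, x_(2t+1)` with `x_i ≠ x_(i+1)` for all `i`, the outputs on the two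
overlapping windows differ. -/
def IsTwoSided (n c t : ℕ) (A : (Fin (2 * t + 1) → Fin n) → Fin c) : Prop :=
  ∀ x : Fin (2 * t + 1 + 1) → Fin n,
    (∀ i : Fin (2 * t + 1), x i.castSucc ≠ x i.succ) →
      A (fun i => x i.castSucc) ≠ A (fun i => x i.succ)

/-- `C n c` is the least number of rounds of a two-sided colour reduction algorithm
from `n` colours to `c` colours. -/
noncomputable def C (n c : ℕ) : ℕ := sInf {t | ∃ A, IsTwoSided n c t A}

/-- Tetration (power tower) with base 2: `tpow 0 = 1`, `tpow (i+1) = 2 ^ tpow i`. -/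
def tpow : ℕ → ℕ
  | 0 => 1
  | i + 1 => 2 ^ tpow i

/-- `logStar n` is the least `i` such that the `i`-fold iterated base-2 logarithm
of `n` is at most `1`. -/
noncomputable def logStar (n : ℕ) : ℕ :=
  sInf {i | (fun x : ℝ => Real.logb 2 x)^[i] (n : ℝ) ≤ 1}


/- ========== auxiliary development ========== -/


section FinHelpers
variable {n m : ℕ} {β : Type*}
lemma comp_castSucc_snoc (x : Fin (m+1) → β) (y : β) :
    (fun i : Fin (m+1) => (Fin.snoc x y : Fin (m+2) → β) i.castSucc) = x := by
  funext i; simp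
lemma comp_succ_snoc (x : Fin (m+1) → β) (y : β) :
    (fun i : Fin (m+1) => (Fin.snoc x y : Fin (m+2) → β) i.succ)
      = Fin.snoc (fun i : Fin m => x i.succ) y := by
  funext i
  refine Fin.lastCases ?_ (fun j => ?_) i
  · rw [Fin.succ_last]; simp
  · rw [Fin.succ_castSucc]; simp only [Fin.snoc_castSucc]
lemma adj_snoc {x : Fin (m+1) → Fin n} {y : Fin n}
    (hx : ∀ i : Fin m, x i.castSucc ≠ x i.succ) (hy : x (Fin.last m) ≠ y) :
    ∀ i : Fin (m+1), (Fin.snoc x y : Fin (m+2) → Fin n) i.castSucc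
      ≠ (Fin.snoc x y : Fin (m+2) → Fin n) i.succ := by
  intro i
  refine Fin.lastCases ?_ (fun j => ?_) i
  · rw [Fin.succ_last]; simpa using hy
  · rw [Fin.succ_castSucc]; simpa only [Fin.snoc_castSucc] using hx j
end FinHelpers

def D3 := Fin 3
instance : DecidableEq D3 := instDecidableEqFin 3
instance : Fintype D3 := Fin.fintype 3
instance : PartialOrder D3 where
  le a b := a = b
  le_refl _ := rfl
  le_trans a b c h1 h2 := Eq.trans h1 h2
  le_antisymm a b h _ := h
instance : DecidableRel (α := D3) (· ≤ ·) := fun a b => decEq a b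

def LS {α : Type} [Preorder α] (s : Finset α) : Prop := ∀ a ∈ s, ∀ b, b ≤ a → b ∈ s

instance LS.dec {α : Type} [Preorder α] [Fintype α] [DecidableEq α]
    [DecidableRel (α := α) (· ≤ ·)] : DecidablePred (LS (α := α)) := fun _ =>
  Finset.decidableDforallFinset

def LF (α : Type) [Preorder α] [Fintype α] [DecidableEq α]
    [DecidableRel (α := α) (· ≤ ·)] : Type := {s : Finset α // LS s}

section
variable {α : Type} [PartialOrder α] [Fintype α] [DecidableEq α]
    [DecidableRel (α := α) (· ≤ ·)]
instance LF.po : PartialOrder (LF α) := Subtype.partialOrder _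
instance LF.ft : Fintype (LF α) := Subtype.fintype _
instance LF.de : DecidableEq (LF α) := Subtype.instDecidableEq
instance LF.dl : DecidableRel (α := LF α) (· ≤ ·) := fun a b =>
  decidable_of_iff (a.1 ⊆ b.1) Iff.rfl
instance LF.dlt : DecidableRel (α := LF α) (· < ·) := fun a b =>
  decidable_of_iff _ (lt_iff_le_not_ge).symm

lemma card_LF_le : Fintype.card (LF α) ≤ 2 ^ Fintype.card α := by
  have h : Function.Injective (fun s : LF α => s.1) := fun a b h => Subtype.ext h
  calc Fintype.card (LF α) ≤ Fintype.card (Finset α) := Fintype.card_le_of_injective _ h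
  _ = 2 ^ Fintype.card α := Fintype.card_finset
end

structure PC : Type 1 where
  α : Type
  [po : PartialOrder α]
  [ft : Fintype α]
  [de : DecidableEq α]
  [dl : DecidableRel (α := α) (· ≤ ·)]
attribute [instance] PC.po PC.ft PC.de PC.dl
def PC.next (P : PC) : PC := ⟨LF P.α⟩
def LevP : ℕ → PC
  | 0 => ⟨D3⟩
  | j + 1 => (LevP j).next
abbrev Lev (j : ℕ) : Type := (LevP j).α

instance PC.dlt (P : PC) : DecidableRel (α := P.α) (· < ·) := fun _ _ =>
  decidable_of_iff _ (lt_iff_le_not_ge).symm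

def IsPOAlg (n t : ℕ) (α : Type) [Preorder α] (B : (Fin (t + 1) → Fin n) → α) : Prop :=
  ∀ x : Fin (t + 1 + 1) → Fin n,
    (∀ i : Fin (t + 1), x i.castSucc ≠ x i.succ) →
      ¬ B (fun i => x i.castSucc) ≤ B (fun i => x i.succ)

lemma poalg_step {n t : ℕ} {α : Type} [PartialOrder α] [Fintype α] [DecidableEq α]
    [DecidableRel (α := α) (· ≤ ·)] {B : (Fin (t + 1 + 1) → Fin n) → α}
    (h : IsPOAlg n (t+1) α B) : ∃ B', IsPOAlg n t (LF α) B' := by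
  refine ⟨fun w => ⟨Finset.univ.filter
      (fun a => ∃ y, y ≠ w (Fin.last t) ∧ a ≤ B (Fin.snoc w y)), ?_⟩, ?_⟩
  · intro a ha b hb
    rw [Finset.mem_filter] at ha ⊢
    obtain ⟨-, y, hy, hle⟩ := ha
    exact ⟨Finset.mem_univ _, y, hy, le_trans hb hle⟩
  · intro x hadj hle
    set W1 : Fin (t+1) → Fin n := fun i => x i.castSucc with hW1
    set W2 : Fin (t+1) → Fin n := fun i => x i.succ with hW2
    have hlast : x (Fin.last t).castSucc ≠ x (Fin.last (t+1)) := by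
      have := hadj (Fin.last t)
      rwa [Fin.succ_last] at this
    have hxW1 : Fin.snoc W1 (x (Fin.last (t+1))) = x := by
      funext i
      refine Fin.lastCases ?_ (fun j => ?_) i
      · simp
      · simp [hW1]
    have hb1 : B x ∈ (Finset.univ.filter
        (fun a => ∃ y, y ≠ W1 (Fin.last t) ∧ a ≤ B (Fin.snoc W1 y))) := by
      rw [Finset.mem_filter]
      exact ⟨Finset.mem_univ _, x (Fin.last (t+1)), Ne.symm hlast, le_of_eq (by rw [hxW1])⟩
    have hb2 : B x ∉ (Finset.univ.filter
        (fun a => ∃ y, y ≠ W2 (Fin.last t) ∧ a ≤ B (Fin.snoc W2 y))) := by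
      rw [Finset.mem_filter]
      rintro ⟨-, y, hy, hley⟩
      have hyx : x (Fin.last (t+1)) ≠ y := by
        intro hc; apply hy; rw [← hc]
        show x (Fin.last (t+1)) = x ((Fin.last t).succ)
        rw [Fin.succ_last]
      have hadj2 : ∀ i : Fin (t+1+1), (Fin.snoc x y : Fin (t+3) → Fin n) i.castSucc
          ≠ (Fin.snoc x y : Fin (t+3) → Fin n) i.succ := adj_snoc hadj hyx
      have := h (Fin.snoc x y) hadj2
      rw [comp_castSucc_snoc, comp_succ_snoc] at this
      exact this hley
    exact hb2 (hle hb1)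

lemma poalg_zero {n : ℕ} {α : Type} [PartialOrder α] [Fintype α]
    {B : (Fin 1 → Fin n) → α} (h : IsPOAlg n 0 α B) : n ≤ Fintype.card α := by
  have hinj : Function.Injective (fun v : Fin n => B (fun _ => v)) := by
    intro u v huv
    by_contra hne
    have hx : ∀ i : Fin 1, (![u, v] : Fin 2 → Fin n) i.castSucc ≠ ![u, v] i.succ := by
      intro i
      have : i = 0 := Subsingleton.elim _ _
      subst this
      simpa using hne
    have := h ![u, v] hx
    apply this
    have e1 : (fun i : Fin 1 => (![u,v] : Fin 2 → Fin n) i.castSucc) = fun _ => u := by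
      funext i; have : i = 0 := Subsingleton.elim _ _; subst this; simp
    have e2 : (fun i : Fin 1 => (![u,v] : Fin 2 → Fin n) i.succ) = fun _ => v := by
      funext i; have : i = 0 := Subsingleton.elim _ _; subst this; simp
    rw [e1, e2]
    exact le_of_eq huv
  simpa using Fintype.card_le_of_injective _ hinj

lemma poalg_start {n t : ℕ} {B : (Fin (t+1) → Fin n) → Fin 3}
    (h : IsOneSided n 3 t B) : IsPOAlg n t D3 (fun w => (B w : D3)) := by
  intro x hadj hle
  exact h x hadj hle

lemma poalg_down {n : ℕ} : ∀ (s j : ℕ),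
    (∃ B, IsPOAlg n s (Lev j) B) → ∃ B', IsPOAlg n 0 (Lev (j + s)) B' := by
  intro s
  induction s with
  | zero => intro j h; exact h
  | succ s ih =>
    intro j ⟨B, hB⟩
    obtain ⟨B', hB'⟩ := poalg_step (α := Lev j) hB
    have : ∃ B'', IsPOAlg n 0 (Lev ((j+1) + s)) B'' := ih (j+1) ⟨B', hB'⟩
    rwa [show j+1+s = j+(s+1) by omega] at this

lemma oneSided_card_le {n t : ℕ} (h : ∃ B, IsOneSided n 3 t B) :
    n ≤ Fintype.card (Lev t) := by
  obtain ⟨B, hB⟩ := h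
  have h0 : ∃ B', IsPOAlg n t (Lev 0) B' := ⟨_, poalg_start hB⟩
  have := poalg_down t 0 h0
  rw [show 0 + t = t by omega] at this
  obtain ⟨B', hB'⟩ := this
  exact poalg_zero hB'

lemma nat_lower_finset_eq_range {J : Finset ℕ} (hJ : ∀ a ∈ J, ∀ b ≤ a, b ∈ J) :
    J = Finset.range J.card := by
  have hsub : Finset.range J.card ⊆ J := by
    intro m hm
    rw [Finset.mem_range] at hm
    by_contra hmJ
    have hJsub : J ⊆ Finset.range m := by
      intro a ha
      rw [Finset.mem_range]
      by_contra hma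
      exact hmJ (hJ a ha m (by omega))
    have := Finset.card_le_card hJsub
    rw [Finset.card_range] at this
    omega
  exact (Finset.eq_of_subset_of_card_le hsub (by rw [Finset.card_range])).symm

section ChainCount
variable {α : Type} [PartialOrder α] [Fintype α] [DecidableEq α]
    [DecidableRel (α := α) (· ≤ ·)]

lemma card_LF_le_of_chain {h : ℕ} (c : Fin (h+1) → α) (hc : StrictMono c) :
    Fintype.card (LF α) ≤ (h+2) * 2 ^ (Fintype.card α - (h+1)) := by
  classical
  set R : Finset α := Finset.image c Finset.univ with hRdef
  have hinj : Function.Injective c := hc.injective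
  have hR : R.card = h + 1 := by
    rw [hRdef, Finset.card_image_of_injective _ hinj, Finset.card_univ, Fintype.card_fin]
  set Rc : Finset α := Finset.univ \ R with hRcdef
  set cnt : LF α → ℕ := fun D => (Finset.univ.filter (fun i : Fin (h+1) => c i ∈ D.1)).card
    with hcnt
  have hcnt_le : ∀ D, cnt D ≤ h + 1 := by
    intro D
    calc cnt D ≤ (Finset.univ : Finset (Fin (h+1))).card := Finset.card_filter_le _ _
    _ = h + 1 := by simp
  have key : ∀ (D : LF α) (i : Fin (h+1)), c i ∈ D.1 ↔ (i : ℕ) < cnt D := by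
    intro D i
    set J : Finset ℕ := (Finset.univ.filter (fun i : Fin (h+1) => c i ∈ D.1)).image Fin.val
      with hJ
    have hJlow : ∀ a ∈ J, ∀ b ≤ a, b ∈ J := by
      intro a ha b hba
      rw [hJ, Finset.mem_image] at ha
      obtain ⟨j, hj, rfl⟩ := ha
      rw [Finset.mem_filter] at hj
      have hblt : b < h + 1 := by have := j.2; omega
      rw [hJ, Finset.mem_image]
      refine ⟨⟨b, hblt⟩, ?_, rfl⟩
      rw [Finset.mem_filter]
      refine ⟨Finset.mem_univ _, ?_⟩
      exact D.2 _ hj.2 _ (hc.monotone (by rw [Fin.le_def]; exact hba))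
    have hJcard : J.card = cnt D := by
      rw [hJ, Finset.card_image_of_injective _ Fin.val_injective]
    have := nat_lower_finset_eq_range hJlow
    constructor
    · intro hi
      have : (i : ℕ) ∈ J := by
        rw [hJ, Finset.mem_image]
        exact ⟨i, by rw [Finset.mem_filter]; exact ⟨Finset.mem_univ _, hi⟩, rfl⟩
      rw [nat_lower_finset_eq_range hJlow, Finset.mem_range, hJcard] at this
      exact this
    · intro hi
      have : (i : ℕ) ∈ J := by
        rw [nat_lower_finset_eq_range hJlow, Finset.mem_range, hJcard]
        exact hi
      rw [hJ, Finset.mem_image] at this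
      obtain ⟨j, hj, hji⟩ := this
      have : j = i := Fin.val_injective hji
      subst this
      rw [Finset.mem_filter] at hj
      exact hj.2
  set Φ : LF α → Fin (h+2) × Finset {x : α // x ∈ Rc} :=
    fun D => (⟨cnt D, by have := hcnt_le D; omega⟩, (D.1 \ R).subtype (· ∈ Rc)) with hΦ
  have hΦinj : Function.Injective Φ := by
    intro D E heq
    rw [hΦ, Prod.mk.injEq] at heq
    obtain ⟨h1, h2⟩ := heq
    have hcnteq : cnt D = cnt E := congrArg Fin.val h1
    have hsdiff : D.1 \ R = E.1 \ R := by
      have := congrArg (Finset.map (Function.Embedding.subtype (· ∈ Rc))) h2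
      rwa [Finset.subtype_map, Finset.subtype_map,
        Finset.filter_true_of_mem (fun x hx => by
          rw [hRcdef]; rw [Finset.mem_sdiff] at hx ⊢; exact ⟨Finset.mem_univ _, hx.2⟩),
        Finset.filter_true_of_mem (fun x hx => by
          rw [hRcdef]; rw [Finset.mem_sdiff] at hx ⊢; exact ⟨Finset.mem_univ _, hx.2⟩)] at this
    apply Subtype.ext
    apply Finset.ext
    intro a
    by_cases haR : a ∈ R
    · rw [hRdef, Finset.mem_image] at haR
      obtain ⟨i, -, rfl⟩ := haR
      rw [key D i, key E i, hcnteq]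
    · have h1 : a ∈ D.1 ↔ a ∈ D.1 \ R := by
        rw [Finset.mem_sdiff]; exact ⟨fun h => ⟨h, haR⟩, fun h => h.1⟩
      have h2 : a ∈ E.1 ↔ a ∈ E.1 \ R := by
        rw [Finset.mem_sdiff]; exact ⟨fun h => ⟨h, haR⟩, fun h => h.1⟩
      rw [h1, h2, hsdiff]
  have hcard := Fintype.card_le_of_injective Φ hΦinj
  rw [Fintype.card_prod, Fintype.card_fin, Fintype.card_finset, Fintype.card_coe] at hcard
  have hRc : Rc.card = Fintype.card α - (h+1) := by
    rw [hRcdef, Finset.card_sdiff_of_subset (Finset.subset_univ _), Finset.card_univ, hR]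
  rwa [hRc] at hcard

end ChainCount

/- concrete chain in Lev 2 -/
def dv0 : D3 := ⟨0, by omega⟩
def dv1 : D3 := ⟨1, by omega⟩
def dv2 : D3 := ⟨2, by omega⟩
def ls0 : Lev 1 := ⟨∅, by decide⟩
def ls1 : Lev 1 := ⟨{dv0}, by decide⟩
def ls2 : Lev 1 := ⟨{dv1}, by decide⟩
def ls3 : Lev 1 := ⟨{dv2}, by decide⟩
def ls4 : Lev 1 := ⟨{dv0, dv1}, by decide⟩
def ls5 : Lev 1 := ⟨{dv0, dv2}, by decide⟩

def c7 : Fin 7 → Lev 2 := ![⟨∅, by decide⟩, ⟨{ls0}, by decide⟩, ⟨{ls0, ls1}, by decide⟩,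
  ⟨{ls0, ls1, ls2}, by decide⟩, ⟨{ls0, ls1, ls2, ls3}, by decide⟩,
  ⟨{ls0, ls1, ls2, ls3, ls4}, by decide⟩, ⟨{ls0, ls1, ls2, ls3, ls4, ls5}, by decide⟩]

lemma c7_strictMono : StrictMono c7 := by
  have : ∀ i j : Fin 7, i < j → c7 i < c7 j := by decide
  exact fun i j => this i j

lemma card_Lev2 : Fintype.card (Lev 2) = 20 := by decide

lemma card_Lev3 : Fintype.card (Lev 3) ≤ 65536 := by
  have := card_LF_le_of_chain (α := Lev 2) c7 c7_strictMono
  rw [card_Lev2] at this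
  calc Fintype.card (Lev 3) ≤ (6+2) * 2 ^ (20 - 7) := this
  _ = 65536 := by norm_num

lemma card_Lev_tower : ∀ i : ℕ, Fintype.card (Lev (3 + i)) ≤ tpow (4 + i) := by
  intro i
  induction i with
  | zero =>
    show Fintype.card (Lev 3) ≤ tpow 4
    calc Fintype.card (Lev 3) ≤ 65536 := card_Lev3
    _ = tpow 4 := by decide
  | succ i ih =>
    have h1 : Fintype.card (Lev (3 + (i+1))) ≤ 2 ^ Fintype.card (Lev (3 + i)) := by
      rw [show 3 + (i+1) = (3+i) + 1 by omega]
      exact card_LF_le (α := Lev (3+i))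
    calc Fintype.card (Lev (3 + (i+1))) ≤ 2 ^ Fintype.card (Lev (3+i)) := h1
    _ ≤ 2 ^ tpow (4+i) := Nat.pow_le_pow_right (by omega) ih
    _ = tpow (4 + (i+1)) := by rw [show 4 + (i+1) = (4+i) + 1 by omega]; rfl

lemma lower_main {n k : ℕ} (hk : 2 ≤ k) (h : ∃ B, IsOneSided n 3 (2*k) B) :
    n ≤ tpow (2*k+1) := by
  have h1 := oneSided_card_le h
  obtain ⟨k', rfl⟩ : ∃ k', k = k' + 2 := ⟨k - 2, by omega⟩
  have h2 := card_Lev_tower (2 * k' + 1)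
  rw [show 3 + (2*k'+1) = 2*(k'+2) by omega] at h2
  rw [show 4 + (2*k'+1) = 2*(k'+2)+1 by omega] at h2
  omega

/- ===== upper bound ===== -/

@[reducible] def H : ℕ → Type
  | 0 => Fin 3
  | j + 1 => Finset (H j)

instance instDecEqH : ∀ j, DecidableEq (H j)
  | 0 => inferInstanceAs (DecidableEq (Fin 3))
  | j + 1 => letI := instDecEqH j; inferInstanceAs (DecidableEq (Finset (H j)))

instance instInhabitedH : ∀ j, Inhabited (H j)
  | 0 => ⟨0⟩
  | _ + 1 => ⟨∅⟩

def hrel : ∀ j, H j → H j → Prop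
  | 0 => fun a b => a ≠ b
  | j + 1 => fun A B => ∃ a ∈ A, ∀ b ∈ B, hrel j a b

instance hrel.dec : ∀ j, DecidableRel (hrel j)
  | 0 => fun _ _ => instDecidableNot
  | j + 1 => fun _ _ => letI := hrel.dec j; Finset.decidableExistsAndFinset

def IsClique (j : ℕ) (F : Finset (H j)) : Prop :=
  ∀ a ∈ F, ∀ b ∈ F, a ≠ b → hrel j a b

def Mx (j m : ℕ) : Prop := ∃ F : Finset (H j), IsClique j F ∧ m ≤ F.card

lemma Mx.mono {j m m' : ℕ} (h : Mx j m) (hm : m' ≤ m) : Mx j m' := by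
  obtain ⟨F, hF, hc⟩ := h
  exact ⟨F, hF, le_trans hm hc⟩

instance IsClique.dec (j : ℕ) (F : Finset (H j)) : Decidable (IsClique j F) :=
  Finset.decidableDforallFinset

lemma Mx.lift {j m : ℕ} (h : Mx j m) : Mx (j+1) (m.choose (m / 2)) := by
  obtain ⟨F, hF, hc⟩ := h
  obtain ⟨F', hF'sub, hF'card⟩ := Finset.exists_subset_card_eq hc
  refine ⟨F'.powersetCard (m / 2), ?_, ?_⟩
  · intro A hA B hB hAB
    rw [Finset.mem_powersetCard] at hA hB
    have hnsub : ¬ A ⊆ B := by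
      intro hsub
      exact hAB (Finset.eq_of_subset_of_card_le hsub (by omega))
    obtain ⟨a, haA, haB⟩ := Finset.not_subset.mp hnsub
    refine ⟨a, haA, fun b hbB => ?_⟩
    have haF : a ∈ F := hF'sub (hA.1 haA)
    have hbF : b ∈ F := hF'sub (hB.1 hbB)
    exact hF a haF b hbF (fun hab => haB (hab ▸ hbB))
  · rw [Finset.card_powersetCard, hF'card]

set_option maxHeartbeats 2000000 in
lemma Mx_base : Mx 2 4 := by
  refine ⟨{ {{0,1}}, {{0,2}}, {{1,2}}, {{0},{1},{2}} }, ?_, ?_⟩ <;> decide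

def Good (n m j : ℕ) (g : (Fin (m + 1) → Fin n) → H j) : Prop :=
  ∀ x : Fin (m + 1 + 1) → Fin n,
    (∀ i : Fin (m + 1), x i.castSucc ≠ x i.succ) →
      hrel j (g (fun i => x i.castSucc)) (g (fun i => x i.succ))

lemma hrel_succ_iff {j : ℕ} (A B : H (j+1)) :
    hrel (j+1) A B ↔ ∃ a ∈ A, ∀ b ∈ B, hrel j a b := Iff.rfl

lemma Good.step {n m j : ℕ} {g : (Fin (m + 1) → Fin n) → H (j+1)}
    (hg : Good n m (j+1) g) : ∃ g', Good n (m+1) j g' := by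
  classical
  refine ⟨fun w => if hw : (∀ i : Fin (m+1), w i.castSucc ≠ w i.succ) then
      ((hrel_succ_iff _ _).mp (hg w hw)).choose else default, ?_⟩
  intro x hadj
  set W1 : Fin (m+2) → Fin n := fun i => x i.castSucc with hW1def
  set W2 : Fin (m+2) → Fin n := fun i => x i.succ with hW2def
  have hadjW1 : ∀ i : Fin (m+1), W1 i.castSucc ≠ W1 i.succ := by
    intro i
    have := hadj i.castSucc
    rw [Fin.succ_castSucc] at this
    exact this
  have hadjW2 : ∀ i : Fin (m+1), W2 i.castSucc ≠ W2 i.succ := by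
    intro i
    have := hadj i.succ
    show x i.castSucc.succ ≠ _
    rw [Fin.succ_castSucc]
    exact this
  have e1 : (fun w => if hw : (∀ i : Fin (m+1), w i.castSucc ≠ w i.succ) then
      ((hrel_succ_iff _ _).mp (hg w hw)).choose else default) W1
      = ((hrel_succ_iff _ _).mp (hg W1 hadjW1)).choose := by
    simp only [dif_pos hadjW1]
  have e2 : (fun w => if hw : (∀ i : Fin (m+1), w i.castSucc ≠ w i.succ) then
      ((hrel_succ_iff _ _).mp (hg w hw)).choose else default) W2
      = ((hrel_succ_iff _ _).mp (hg W2 hadjW2)).choose := by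
    simp only [dif_pos hadjW2]
  rw [e1, e2]
  obtain ⟨ha1, hdom⟩ := ((hrel_succ_iff _ _).mp (hg W1 hadjW1)).choose_spec
  obtain ⟨ha2, -⟩ := ((hrel_succ_iff _ _).mp (hg W2 hadjW2)).choose_spec
  apply hdom
  have : (fun i : Fin (m+1) => W1 i.succ) = (fun i : Fin (m+1) => W2 i.castSucc) := by
    funext i
    show x i.succ.castSucc = x i.castSucc.succ
    rw [Fin.succ_castSucc]
  rw [this]
  exact ha2

lemma Good.iter {n : ℕ} : ∀ (j m : ℕ) (g : (Fin (m + 1) → Fin n) → H j),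
    Good n m j g → ∃ B, Good n (m + j) 0 B := by
  intro j
  induction j with
  | zero => intro m g hg; exact ⟨g, hg⟩
  | succ j ih =>
    intro m g hg
    obtain ⟨g', hg'⟩ := hg.step
    have := ih (m+1) g' hg'
    rwa [show m+1+j = m+(j+1) by omega] at this

lemma good_zero_oneSided {n t : ℕ} (B : (Fin (t + 1) → Fin n) → H 0)
    (hB : Good n t 0 B) : IsOneSided n 3 t B :=
  fun x hx => hB x hx

lemma clique_to_alg {n t : ℕ} (h : Mx t n) : ∃ B, IsOneSided n 3 t B := by
  obtain ⟨F, hF, hcard⟩ := h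
  have hcard' : Fintype.card (Fin n) ≤ Fintype.card {x // x ∈ F} := by
    rw [Fintype.card_fin, Fintype.card_coe]; exact hcard
  obtain ⟨emb⟩ := Function.Embedding.nonempty_of_card_le hcard'
  have hg0 : Good n 0 t (fun w => (emb (w 0) : H t)) := by
    intro x hx
    have h01 : x (0 : Fin 1).castSucc ≠ x (0 : Fin 1).succ := hx 0
    have hne : emb (x (0 : Fin 1).castSucc) ≠ emb (x (0 : Fin 1).succ) :=
      fun hc => h01 (by
        have := emb.injective (Subtype.ext (by exact congrArg Subtype.val hc)); exact this)
    exact hF _ (emb _).2 _ (emb _).2 (fun hc => hne (Subtype.ext hc))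
  have hiter := Good.iter t 0 _ hg0
  rw [show 0 + t = t by omega] at hiter
  obtain ⟨B, hB⟩ := hiter
  exact ⟨B, good_zero_oneSided B hB⟩

lemma tpow_succ (j : ℕ) : tpow (j+1) = 2 ^ tpow j := rfl

lemma tpow_one_le (j : ℕ) : 1 ≤ tpow j := by
  induction j with
  | zero => simp [tpow]
  | succ j ih => rw [tpow_succ]; exact le_trans ih (Nat.le_of_lt (Nat.lt_two_pow_self))

lemma tpow_mono : Monotone tpow := by
  apply monotone_nat_of_le_succ
  intro j
  rw [tpow_succ]
  exact le_of_lt (Nat.lt_two_pow_self)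

lemma tpow_four : tpow 4 = 65536 := by decide

lemma lin_le_two_pow : ∀ h, 3 ≤ h → 2 * h + 2 ≤ 2 ^ h := by
  intro h hh
  induction h with
  | zero => omega
  | succ h ih =>
    rcases Nat.lt_or_ge h 3 with h' | h'
    · interval_cases h <;> simp_all
    · have := ih (by omega)
      have h2 : 2 ^ h + 2 ^ h = 2 ^ (h+1) := by ring
      omega

lemma lin_le_two_pow' : ∀ p, 4 ≤ p → 2 * p + 4 ≤ 2 ^ p := by
  intro p hp
  induction p with
  | zero => omega
  | succ p ih =>
    rcases Nat.lt_or_ge p 4 with h' | h'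
    · interval_cases p <;> simp_all
    · have := ih (by omega)
      have h2 : 2 ^ p + 2 ^ p = 2 ^ (p+1) := by ring
      omega

lemma succ_le_two_pow_half {m : ℕ} (hm : 6 ≤ m) : m + 1 ≤ 2 ^ (m / 2) := by
  have h3 : 3 ≤ m / 2 := by omega
  have := lin_le_two_pow (m/2) h3
  omega

lemma two_pow_le_choose (m : ℕ) : 2 ^ m ≤ (m + 1) * m.choose (m / 2) := by
  have h1 : ∑ i ∈ Finset.range (m+1), m.choose i = 2 ^ m := Nat.sum_range_choose m
  have h2 : ∀ i ∈ Finset.range (m+1), m.choose i ≤ m.choose (m/2) := fun i _ =>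
    Nat.choose_le_middle i m
  calc 2 ^ m = ∑ i ∈ Finset.range (m+1), m.choose i := h1.symm
  _ ≤ (Finset.range (m+1)).card • m.choose (m/2) := Finset.sum_le_card_nsmul _ _ _ h2
  _ = (m+1) * m.choose (m/2) := by simp [Finset.card_range]

/-- one "exponential" step: from a clique of size `m ≥ 2^p + something`, with `p`
large, one lift gives a clique of size `≥ 2^(m - m/2) ≥ 2^(m/2)`. -/
lemma Mx.lift_pow {j m e : ℕ} (h : Mx j m) (hm : 6 ≤ m) (he : e ≤ m / 2) :
    Mx (j+1) (2 ^ e) := by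
  have hl := h.lift
  have hb := two_pow_le_choose m
  have hs : m + 1 ≤ 2 ^ (m / 2) := succ_le_two_pow_half hm
  -- 2^m ≤ (m+1) * choose ≤ 2^(m/2) * choose, so choose ≥ 2^(m - m/2) ≥ 2^e
  have h1 : 2 ^ m ≤ 2 ^ (m / 2) * m.choose (m / 2) :=
    le_trans hb (Nat.mul_le_mul_right _ hs)
  have h2 : 2 ^ (m / 2) * 2 ^ (m - m / 2) = 2 ^ m := by
    rw [← pow_add]
    congr 1
    omega
  have h3 : 2 ^ (m - m / 2) ≤ m.choose (m / 2) := by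
    have := h1
    rw [← h2] at this
    exact Nat.le_of_mul_le_mul_left this (Nat.pow_pos (by omega))
  refine (hl.mono ?_)
  calc 2 ^ e ≤ 2 ^ (m - m/2) := Nat.pow_le_pow_right (by omega) (by omega)
  _ ≤ m.choose (m/2) := h3

lemma choose_20 : Nat.choose 20 10 = 184756 := by decide

lemma Mx_5 : Mx 5 184756 := by
  have h2 : Mx 2 4 := Mx_base
  have h3 : Mx 3 6 := by have := h2.lift; rwa [show Nat.choose 4 2 = 6 by decide] at this
  have h4 : Mx 4 20 := by have := h3.lift; rwa [show Nat.choose 6 3 = 20 by decide] at this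
  have h5 := h4.lift
  rwa [show (20:ℕ)/2 = 10 by norm_num, choose_20] at h5

lemma Mx_inv : ∀ k, 2 ≤ k → Mx (2*k+1) (2 * tpow (2*k) + 2) := by
  intro k hk
  induction k with
  | zero => omega
  | succ k ih =>
    rcases Nat.lt_or_ge k 2 with hk2 | hk2
    · -- k+1 = 2 : base case
      have hk1 : k = 1 := by omega
      subst hk1
      show Mx 5 (2 * tpow 4 + 2)
      exact Mx_5.mono (by rw [tpow_four]; norm_num)
    · -- induction step
      have hMk := ih hk2
      set p := tpow (2*k) with hp
      have hp4 : 65536 ≤ p := by rw [hp, ← tpow_four]; exact tpow_mono (by omega)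
      have hm : 6 ≤ 2*p+2 := by omega
      -- first lift : size ≥ 2^(p+2)
      have h1 : Mx (2*k+2) (2 ^ (p+2)) := by
        have hdiv : (2*p+2)/2 = p + 1 := by omega
        have hb := two_pow_le_choose (2*p+2)
        have hle : 2*p+2+1 ≤ 2 ^ p := by
          have := lin_le_two_pow' p (by omega)
          omega
        have h1' : 2 ^ (2*p+2) ≤ 2 ^ p * (2*p+2).choose ((2*p+2)/2) :=
          le_trans hb (Nat.mul_le_mul_right _ hle)
        have h2' : 2 ^ p * 2 ^ (p+2) = 2 ^ (2*p+2) := by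
          rw [← pow_add]; congr 1; omega
        have h3' : 2 ^ (p+2) ≤ (2*p+2).choose ((2*p+2)/2) := by
          rw [← h2'] at h1'
          exact Nat.le_of_mul_le_mul_left h1' (Nat.pow_pos (by omega))
        exact (hMk.lift).mono h3'
      -- second lift : size ≥ 2^(2^p + 2)
      have h2 : Mx (2*k+3) (2 ^ (2^p + 2)) := by
        apply h1.lift_pow
        · have : (8:ℕ) ≤ 2 ^ (p+2) := by
            calc (8:ℕ) = 2^3 := by norm_num
            _ ≤ 2^(p+2) := Nat.pow_le_pow_right (by omega) (by omega)
          omega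
        · have : 2 ^ (p+2) / 2 = 2 ^ (p+1) := by
            rw [pow_succ]
            omega
          rw [this, pow_succ]
          have h2p : 2 ≤ 2 ^ p := by
            calc (2:ℕ) = 2^1 := by norm_num
            _ ≤ 2^p := Nat.pow_le_pow_right (by omega) (by omega)
          omega
      have hshape : 2*(k+1)+1 = 2*k+3 := by omega
      rw [hshape]
      apply h2.mono
      have htp : tpow (2*(k+1)) = 2 ^ 2 ^ p := by
        rw [show 2*(k+1) = (2*k+1)+1 by omega, tpow_succ, tpow_succ]
      rw [htp]
      have h1' : (1:ℕ) ≤ 2 ^ 2 ^ p := Nat.one_le_two_pow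
      calc 2 * 2^2^p + 2 ≤ 4 * 2^2^p := by omega
      _ = 2^2 * 2^2^p := by norm_num
      _ = 2 ^ (2^p + 2) := by rw [← pow_add]; ring_nf

lemma upper_Mx {k : ℕ} (hk : 2 ≤ k) : Mx (2*k+2) (tpow (2*k+1) + 1) := by
  have hMk := Mx_inv k hk
  set p := tpow (2*k) with hp
  have hp4 : 65536 ≤ p := by rw [hp, ← tpow_four]; exact tpow_mono (by omega)
  have h1 : Mx (2*k+2) (2 ^ (p+1)) := by
    apply hMk.lift_pow (by omega)
    omega
  apply h1.mono
  have : tpow (2*k+1) = 2 ^ p := tpow_succ _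
  rw [this, pow_succ]
  have h2p : 1 ≤ 2 ^ p := Nat.one_le_two_pow
  omega

lemma upper_main {k : ℕ} (hk : 2 ≤ k) :
    ∃ B, IsOneSided (tpow (2*k+1) + 1) 3 (2*k+2) B :=
  clique_to_alg (upper_Mx hk)

/- ===== glue ===== -/

lemma isTwoSided_iff_oneSided {n c t : ℕ} (A : (Fin (2*t+1) → Fin n) → Fin c) :
    IsTwoSided n c t A ↔ IsOneSided n c (2*t) A := Iff.rfl

lemma isOneSided_mono {n c t : ℕ} (h : ∃ B, IsOneSided n c t B) :
    ∃ B, IsOneSided n c (t+1) B := by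
  obtain ⟨B, hB⟩ := h
  refine ⟨fun w => B (fun i => w i.castSucc), ?_⟩
  intro x hadj
  have hy : ∀ i : Fin (t+1), (fun i' : Fin (t+2) => x i'.castSucc) i.castSucc
      ≠ (fun i' : Fin (t+2) => x i'.castSucc) i.succ := by
    intro i
    have := hadj i.castSucc
    rw [Fin.succ_castSucc] at this
    exact this
  exact hB (fun i : Fin (t+2) => x i.castSucc) hy

lemma isOneSided_mono' {n c t t' : ℕ} (htt : t ≤ t') (h : ∃ B, IsOneSided n c t B) :
    ∃ B, IsOneSided n c t' B := by
  obtain ⟨d, rfl⟩ : ∃ d, t' = t + d := ⟨t' - t, by omega⟩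
  clear htt
  induction d with
  | zero => exact h
  | succ d ih => exact isOneSided_mono ih

lemma C_eq {k : ℕ} (hk : 2 ≤ k) : C (tpow (2*k+1) + 1) 3 = k + 1 := by
  set n := tpow (2*k+1) + 1 with hn
  have hub : (k+1) ∈ {t | ∃ A, IsTwoSided n 3 t A} := by
    obtain ⟨B, hB⟩ := upper_main hk
    have : ∃ B, IsOneSided n 3 (2*(k+1)) B := by
      rw [show 2*(k+1) = 2*k+2 by omega]
      exact ⟨B, hB⟩
    obtain ⟨B', hB'⟩ := this
    exact ⟨B', (isTwoSided_iff_oneSided B').mpr hB'⟩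
  have hlb : ∀ j ∈ {t | ∃ A, IsTwoSided n 3 t A}, k+1 ≤ j := by
    intro j hj
    by_contra hjk
    have hjk' : j ≤ k := by omega
    obtain ⟨A, hA⟩ := hj
    have h1 : ∃ B, IsOneSided n 3 (2*j) B := ⟨A, (isTwoSided_iff_oneSided A).mp hA⟩
    have h2 : ∃ B, IsOneSided n 3 (2*k) B := isOneSided_mono' (by omega) h1
    have := lower_main hk h2
    omega
  exact le_antisymm (Nat.sInf_le hub) (le_csInf ⟨_, hub⟩ hlb)

/- ===== logStar ===== -/

lemma logb_tpow_cast (m : ℕ) : Real.logb 2 ((2:ℝ) ^ m) = m := by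
  rw [Real.logb_pow, Real.logb_self_eq_one (by norm_num)]
  simp

lemma logStar_sandwich {k : ℕ} :
    ∀ i ≤ 2*k+1, (tpow (2*k+1-i) : ℝ) < (fun x : ℝ => Real.logb 2 x)^[i] ((tpow (2*k+1) + 1 : ℕ) : ℝ)
      ∧ (fun x : ℝ => Real.logb 2 x)^[i] ((tpow (2*k+1) + 1 : ℕ) : ℝ) ≤ (tpow (2*k+1-i) : ℝ) + 1 := by
  intro i hi
  induction i with
  | zero =>
    constructor
    · simp only [Function.iterate_zero, id_eq, Nat.sub_zero]
      push_cast
      linarith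
    · simp only [Function.iterate_zero, id_eq, Nat.sub_zero]
      push_cast
      linarith
  | succ i ih =>
    obtain ⟨hlo, hhi⟩ := ih (by omega)
    set v := (fun x : ℝ => Real.logb 2 x)^[i] ((tpow (2*k+1) + 1 : ℕ) : ℝ) with hv
    have hiter : (fun x : ℝ => Real.logb 2 x)^[i+1] ((tpow (2*k+1) + 1 : ℕ) : ℝ)
        = Real.logb 2 v := by
      rw [Function.iterate_succ_apply']
    set j := 2*k+1-(i+1) with hj
    have hji : 2*k+1-i = j+1 := by omega
    rw [hji] at hlo hhi
    have htp : (tpow (j+1) : ℝ) = (2:ℝ) ^ (tpow j) := by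
      rw [tpow_succ]; push_cast; ring
    have htpos : (0:ℝ) < (2:ℝ) ^ (tpow j) := by positivity
    constructor
    · rw [hiter]
      calc (tpow j : ℝ) = Real.logb 2 ((2:ℝ) ^ (tpow j)) := (logb_tpow_cast _).symm
      _ < Real.logb 2 v := Real.logb_lt_logb (by norm_num) htpos (by rw [← htp]; exact hlo)
    · rw [hiter]
      have hv2 : v ≤ (2:ℝ) ^ (tpow j + 1) := by
        have h1 : (tpow (j+1) : ℝ) + 1 ≤ (2:ℝ) ^ (tpow j + 1) := by
          rw [pow_succ, ← htp]
          have : (1:ℝ) ≤ (tpow (j+1) : ℝ) := by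
            exact_mod_cast tpow_one_le (j+1)
          linarith
        linarith
      have hvpos : (0:ℝ) < v := by
        have h1 : (0:ℝ) < (tpow (j+1) : ℝ) := by
          have := tpow_one_le (j+1)
          exact_mod_cast (by omega : 0 < tpow (j+1))
        linarith
      calc Real.logb 2 v ≤ Real.logb 2 ((2:ℝ) ^ (tpow j + 1)) :=
        Real.logb_le_logb_of_le (by norm_num) hvpos hv2
      _ = (tpow j : ℝ) + 1 := by rw [logb_tpow_cast]; push_cast; ring

lemma logStar_eq {k : ℕ} : logStar (tpow (2*k+1) + 1) = 2*k + 2 := by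
  set f : ℝ → ℝ := fun x => Real.logb 2 x with hf
  set S := {i | f^[i] ((tpow (2*k+1) + 1 : ℕ) : ℝ) ≤ 1} with hS
  have hmem : (2*k+2) ∈ S := by
    obtain ⟨hlo, hhi⟩ := logStar_sandwich (k := k) (2*k+1) (le_refl _)
    rw [show 2*k+1-(2*k+1) = 0 by omega] at hlo hhi
    have htp0 : (tpow 0 : ℝ) = 1 := by norm_num [tpow]
    rw [htp0] at hlo hhi
    show f^[2*k+2] _ ≤ 1
    rw [show 2*k+2 = (2*k+1)+1 by omega, Function.iterate_succ_apply']
    show Real.logb 2 (f^[2*k+1] _) ≤ 1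
    calc Real.logb 2 (f^[2*k+1] ((tpow (2*k+1) + 1 : ℕ) : ℝ)) ≤ Real.logb 2 2 :=
      Real.logb_le_logb_of_le (by norm_num) (by linarith) (by linarith)
    _ = 1 := Real.logb_self_eq_one (by norm_num)
  have hnotmem : ∀ i ≤ 2*k+1, i ∉ S := by
    intro i hi hmem'
    obtain ⟨hlo, -⟩ := logStar_sandwich (k := k) i hi
    have h1 : (1:ℝ) ≤ (tpow (2*k+1-i) : ℝ) := by exact_mod_cast tpow_one_le _
    have : f^[i] ((tpow (2*k+1) + 1 : ℕ) : ℝ) ≤ 1 := hmem'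
    linarith
  apply le_antisymm (Nat.sInf_le hmem)
  apply le_csInf ⟨_, hmem⟩
  intro j hj
  by_contra hlt
  exact hnotmem j (by omega) hj


/-- For every integer `k ≥ 2`, letting `n = 2↑↑(2k+1) + 1`, the two-sided colour
reduction complexity satisfies `C(n,3) = k + 1`; moreover `log* n = 2k + 2`, so
`C(n,3) = (log* n) / 2`. -/
theorem stmt_0 (k : ℕ) (hk : 2 ≤ k) :
    C (tpow (2 * k + 1) + 1) 3 = k + 1 ∧
    logStar (tpow (2 * k + 1) + 1) = 2 * k + 2 ∧
    C (tpow (2 * k + 1) + 1) 3 = logStar (tpow (2 * k + 1) + 1) / 2 := by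
  refine ⟨C_eq hk, logStar_eq, ?_⟩
  rw [C_eq hk, logStar_eq]
  omega
end

section
/- For all integers n ≥ c ≥ 3, C(n,c) = ⌈T(n,c)/2⌉. -/

lemma oneSided_succ {n c t : ℕ} {B : (Fin (t + 1) → Fin n) → Fin c}
    (h : IsOneSided n c t B) :
    IsOneSided n c (t + 1) (fun x => B (fun j => x j.succ)) := by
  intro x hx
  have hy : ∀ i : Fin (t + 1), (x ∘ Fin.succ) i.castSucc ≠ (x ∘ Fin.succ) i.succ := by
    intro i
    have := hx i.succ
    simp only [Function.comp_apply, Fin.succ_castSucc]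
    exact this
  have := h (x ∘ Fin.succ) hy
  simp only [Function.comp_apply, Fin.succ_castSucc] at this
  exact this

/-- For all integers `n ≥ c ≥ 3`, `C(n,c) = ⌈T(n,c)/2⌉`. -/
theorem stmt_1 (n c : ℕ) (hc : 3 ≤ c) (hcn : c ≤ n) :
    C n c = (T n c + 1) / 2 := by
  have key : {t | ∃ A, IsTwoSided n c t A} = {t | ∃ B, IsOneSided n c (2 * t) B} := rfl
  by_cases hS : {t | ∃ B, IsOneSided n c t B}.Nonempty
  · have h0 : ∃ B, IsOneSided n c (T n c) B := Nat.sInf_mem hS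
    have hmem : ∀ t, T n c ≤ t → ∃ B, IsOneSided n c t B := by
      intro t ht
      induction t, ht using Nat.le_induction with
      | base => exact h0
      | succ m hm ih =>
        obtain ⟨B, hB⟩ := ih
        exact ⟨_, oneSided_succ hB⟩
    have hT : ∀ t, (∃ B, IsOneSided n c t B) ↔ T n c ≤ t := by
      intro t
      exact ⟨fun h => Nat.sInf_le h, hmem t⟩
    have hC : C n c = sInf {t | T n c ≤ 2 * t} := by
      unfold C
      rw [key]
      congr 1
      ext t
      exact hT (2 * t)
    rw [hC]
    apply le_antisymm
    · apply Nat.sInf_le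
      show T n c ≤ 2 * ((T n c + 1) / 2)
      omega
    · apply le_csInf ⟨T n c, by simp only [Set.mem_setOf_eq]; omega⟩
      intro t ht
      simp only [Set.mem_setOf_eq] at ht
      omega
  · have h2 : {t | ∃ A, IsTwoSided n c t A} = ∅ := by
      rw [key]
      ext t
      simp only [Set.mem_setOf_eq, Set.mem_empty_iff_false, iff_false]
      rintro ⟨B, hB⟩
      exact hS ⟨2 * t, B, hB⟩
    have hT0 : T n c = 0 := by
      unfold T
      rw [Set.not_nonempty_iff_eq_empty] at hS
      rw [hS, Nat.sInf_empty]
    unfold C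
    rw [h2, Nat.sInf_empty, hT0]
end

section
/- For every integer k ≥ 2, T(binom(2k,k), 2k) = 1; that is, there exists a function B : [binom(2k,k)]^2 → [2k] such that B(u,v) ≠ B(v,w) whenever u ≠ v and v ≠ w, and no such zero-round function [binom(2k,k)] → [2k] exists (since binom(2k,k) > 2k). -/
lemma card_gt (k : ℕ) (hk : 2 ≤ k) : 2 * k < (2 * k).choose k := by
  have h1 : (2*k).choose 2 ≤ (2*k).choose k := by
    have := Nat.choose_le_middle 2 (2*k)
    simpa [Nat.mul_div_cancel_left] using this
  have h2 : (2*k).choose 2 = k * (2*k-1) := by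
    rw [Nat.choose_two_right]
    have h : 2*k*(2*k-1) = (k*(2*k-1))*2 := by ring
    rw [h, Nat.mul_div_cancel _ (by norm_num)]
  have hj : 3 ≤ 2*k-1 := by omega
  have : 2 * k < k * (2*k-1) := by nlinarith
  omega

lemma no_inj (k : ℕ) (hk : 2 ≤ k) :
    ¬ ∃ B : Fin ((2 * k).choose k) → Fin (2 * k), ∀ u v, u ≠ v → B u ≠ B v := by
  rintro ⟨B, hB⟩
  have hinj : Function.Injective B := fun u v h => by
    by_contra hne; exact hB u v hne h
  have := Fintype.card_le_of_injective B hinj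
  simp only [Fintype.card_fin] at this
  exact absurd this (not_le.mpr (card_gt k hk))

lemma good_B (k : ℕ) (hk : 2 ≤ k) :
    ∃ B : Fin ((2 * k).choose k) → Fin ((2 * k).choose k) → Fin (2 * k),
      ∀ u v w, u ≠ v → v ≠ w → B u v ≠ B v w := by
  have hc : Fintype.card (Fin ((2*k).choose k)) =
      Fintype.card {s : Finset (Fin (2*k)) // s.card = k} := by
    simp [Fintype.card_finset_len]
  let e := Fintype.equivOfCardEq hc
  have hpos : 0 < 2 * k := by omega
  have hne : ∀ u v : Fin ((2*k).choose k), u ≠ v → ((e u).1 \ (e v).1).Nonempty := by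
    intro u v huv
    rw [Finset.sdiff_nonempty]
    intro hsub
    have : (e u).1 = (e v).1 :=
      Finset.eq_of_subset_of_card_le hsub (by rw [(e u).2, (e v).2])
    exact huv (e.injective (Subtype.ext this))
  refine ⟨fun u v => if h : u = v then ⟨0, hpos⟩ else ((e u).1 \ (e v).1).min' (hne u v h),
    fun u v w huv hvw => ?_⟩
  simp only [dif_neg huv, dif_neg hvw]
  have h1 := Finset.min'_mem _ (hne u v huv)
  have h2 := Finset.min'_mem _ (hne v w hvw)
  rw [Finset.mem_sdiff] at h1 h2
  intro heq
  rw [heq] at h1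
  exact h1.2 h2.1

/-- For every `k ≥ 2`, `T(binom(2k,k), 2k) = 1`: there exists a one-round function
`B : [binom(2k,k)]² → [2k]` with `B(u,v) ≠ B(v,w)` whenever `u ≠ v` and `v ≠ w`,
and no zero-round function `[binom(2k,k)] → [2k]` exists. -/
theorem stmt_2 (k : ℕ) (hk : 2 ≤ k) :
    T ((2 * k).choose k) (2 * k) = 1 ∧
    (∃ B : Fin ((2 * k).choose k) → Fin ((2 * k).choose k) → Fin (2 * k),
      ∀ u v w, u ≠ v → v ≠ w → B u v ≠ B v w) ∧
    ¬ ∃ B : Fin ((2 * k).choose k) → Fin (2 * k), ∀ u v, u ≠ v → B u ≠ B v := by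
  obtain ⟨B, hB⟩ := good_B k hk
  refine ⟨?_, ⟨B, hB⟩, no_inj k hk⟩
  have h1 : 1 ∈ {t | ∃ B', IsOneSided ((2*k).choose k) (2*k) t B'} := by
    refine ⟨fun f => B (f 0) (f 1), fun x hx => ?_⟩
    have h01 : x 0 ≠ x 1 := hx 0
    have h12 : x 1 ≠ x 2 := hx 1
    simpa using hB (x 0) (x 1) (x 2) h01 h12
  have h0 : 0 ∉ {t | ∃ B', IsOneSided ((2*k).choose k) (2*k) t B'} := by
    rintro ⟨B', hB'⟩
    apply no_inj k hk
    refine ⟨fun a => B' (fun _ => a), fun u v huv => ?_⟩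
    have := hB' ![u, v] ?_
    · have e1 : (fun i : Fin 1 => (![u, v] : Fin 2 → _) i.castSucc) = fun _ => u := by
        funext i; fin_cases i; rfl
      have e2 : (fun i : Fin 1 => (![u, v] : Fin 2 → _) i.succ) = fun _ => v := by
        funext i; fin_cases i; rfl
      rwa [e1, e2] at this
    · intro i
      fin_cases i
      simpa using huv
  unfold T
  refine le_antisymm (Nat.sInf_le h1) ?_
  rw [Nat.one_le_iff_ne_zero]
  intro hz
  rcases Nat.sInf_eq_zero.mp hz with h | h
  · exact h0 h
  · rw [h] at h1; exact h1
end

section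
/- There exists a function B : [4]^3 → [3] such that for all x_0, x_1, x_2, x_3 ∈ [4] with x_0 ≠ x_1, x_1 ≠ x_2 and x_2 ≠ x_3, one has B(x_0,x_1,x_2) ≠ B(x_1,x_2,x_3). Consequently T(4,3) ≤ 2. -/
def Btbl : Fin 4 → Fin 4 → Fin 4 → Fin 3 :=
  ![![![0, 0, 0, 0], ![0, 0, 0, 0], ![0, 1, 0, 0], ![0, 1, 1, 0]], ![![0, 1, 2, 2], ![0, 0, 0, 0], ![1, 1, 0, 2], ![1, 1, 1, 0]], ![![0, 2, 2, 2], ![0, 0, 0, 0], ![0, 0, 0, 0], ![1, 1, 1, 0]], ![![0, 2, 2, 2], ![0, 0, 0, 0], ![0, 2, 0, 0], ![0, 0, 0, 0]]]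

lemma Btbl_prop : ∀ x0 x1 x2 x3 : Fin 4, x0 ≠ x1 → x1 ≠ x2 → x2 ≠ x3 →
    Btbl x0 x1 x2 ≠ Btbl x1 x2 x3 := by decide

lemma Bone : IsOneSided 4 3 2 (fun v => Btbl (v 0) (v 1) (v 2)) := by
  intro x h
  exact Btbl_prop (x 0) (x 1) (x 2) (x 3) (h 0) (h 1) (h 2)

/-- There exists a two-round one-sided algorithm `B : [4]³ → [3]`, hence `T(4,3) ≤ 2`. -/
theorem stmt_4 :
    (∃ B : Fin 4 → Fin 4 → Fin 4 → Fin 3,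
      ∀ x0 x1 x2 x3, x0 ≠ x1 → x1 ≠ x2 → x2 ≠ x3 → B x0 x1 x2 ≠ B x1 x2 x3) ∧
    T 4 3 ≤ 2 := by
  refine ⟨⟨Btbl, Btbl_prop⟩, ?_⟩
  exact Nat.sInf_le ⟨_, Bone⟩
end

section
/- For every integer c = 4h with h > 1, T((3/2)·2^c, (3/2)·c) = 1; that is, there exists a function B : [(3/2)·2^c]^2 → [(3/2)·c] such that B(u,v) ≠ B(v,w) whenever u ≠ v and v ≠ w, and no zero-round such function exists. -/

lemma nine_le_aux (h : ℕ) (hh : 2 ≤ h) : 9 * h ≤ 2 ^ (2 * h + 1) := by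
  induction h with
  | zero => omega
  | succ k ih =>
    rcases Nat.lt_or_ge k 2 with hk | hk
    · interval_cases k <;> omega
    · have e : 2 * (k + 1) + 1 = (2 * k + 1) + 2 := by ring
      rw [e, pow_add]
      have := ih hk
      omega

lemma exists_B_aux (n c k : ℕ) (hc : 0 < c) (hn : n ≤ c.choose k) :
    ∃ B : Fin n → Fin n → Fin c, ∀ u v w, u ≠ v → v ≠ w → B u v ≠ B v w := by
  classical
  have hcard : n ≤ Fintype.card {s : Finset (Fin c) // s.card = k} := by
    rw [Fintype.card_finset_len, Fintype.card_fin]; exact hn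
  obtain ⟨f⟩ : Nonempty (Fin n ↪ {s : Finset (Fin c) // s.card = k}) := by
    apply Function.Embedding.nonempty_of_card_le
    simpa using hcard
  have key : ∀ u v : Fin n, u ≠ v → ((f v).1 \ (f u).1).Nonempty := by
    intro u v huv
    rw [Finset.sdiff_nonempty]
    intro hsub
    have : (f v).1 = (f u).1 :=
      Finset.eq_of_subset_of_card_le hsub (by rw [(f u).2, (f v).2])
    exact huv (f.injective (Subtype.ext this)).symm
  refine ⟨fun u v => if hne : ((f v).1 \ (f u).1).Nonempty then ((f v).1 \ (f u).1).min' hne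
    else ⟨0, hc⟩, ?_⟩
  intro u v w huv hvw
  have h1 := key u v huv
  have h2 := key v w hvw
  simp only [dif_pos h1, dif_pos h2]
  have m1 := Finset.min'_mem _ h1
  have m2 := Finset.min'_mem _ h2
  rw [Finset.mem_sdiff] at m1 m2
  intro heq
  rw [heq] at m1
  exact m2.2 m1.1

/-- For every `c = 4h` with `h > 1`, `T((3/2)·2^c, (3/2)·c) = 1`: there is a one-round
function `B : [(3/2)·2^c]² → [(3/2)·c]` with `B(u,v) ≠ B(v,w)` whenever `u ≠ v` and
`v ≠ w`, and no zero-round such function exists. -/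
theorem stmt_5 (h : ℕ) (hh : 1 < h) :
    T (3 * 2 ^ (4 * h) / 2) (3 * (4 * h) / 2) = 1 ∧
    (∃ B : Fin (3 * 2 ^ (4 * h) / 2) → Fin (3 * 2 ^ (4 * h) / 2) → Fin (3 * (4 * h) / 2),
      ∀ u v w, u ≠ v → v ≠ w → B u v ≠ B v w) ∧
    ¬ ∃ B : Fin (3 * 2 ^ (4 * h) / 2) → Fin (3 * (4 * h) / 2),
        ∀ u v, u ≠ v → B u ≠ B v := by
  
  have cN : 3 * (4 * h) / 2 = 6 * h := by omega
  rw [cN]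
  set m : ℕ := 4 * h - 1 with hm
  have hm1 : 4 * h = m + 1 := by omega
  have hpow : 2 ^ (4 * h) = 2 * 2 ^ m := by rw [hm1, pow_succ]; ring
  have hN : 3 * 2 ^ (4 * h) / 2 = 3 * 2 ^ m := by rw [hpow]; omega
  set N : ℕ := 3 * 2 ^ (4 * h) / 2 with hNdef
  have h9 : 9 * h ≤ 2 ^ (2 * h + 1) := nine_le_aux h hh
  have hmle : 2 ^ (2 * h + 1) ≤ 2 ^ m := Nat.pow_le_pow_right (by norm_num) (by omega)
  have hlt : 6 * h < N := by
    rw [hN]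
    have : 0 < 2 ^ m := Nat.pow_pos (by norm_num)
    omega
  have hchoose : N ≤ (6 * h).choose (3 * h) := by
    have hcb := Nat.four_pow_lt_mul_centralBinom (3 * h) (by omega)
    have hcb' : (2 * (3 * h)).choose (3 * h) = (6 * h).choose (3 * h) := by ring_nf
    rw [Nat.centralBinom, hcb'] at hcb
    have h4 : 4 ^ (3 * h) = 2 ^ (6 * h) := by
      rw [show (4:ℕ) = 2 ^ 2 by norm_num, ← pow_mul]; ring_nf
    have hkey : 3 * h * N ≤ 2 ^ (6 * h) := by
      rw [hN, show 2 ^ (6 * h) = 2 ^ (2 * h + 1) * 2 ^ m by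
        rw [← pow_add]; congr 1; omega]
      calc 3 * h * (3 * 2 ^ m) = 9 * h * 2 ^ m := by ring
        _ ≤ 2 ^ (2 * h + 1) * 2 ^ m := Nat.mul_le_mul_right _ h9
    rw [← h4] at hkey
    have : 3 * h * N < 3 * h * (6 * h).choose (3 * h) := lt_of_le_of_lt hkey hcb
    exact le_of_lt (lt_of_mul_lt_mul_left this (Nat.zero_le _))
  obtain ⟨Bp, hBp⟩ := exists_B_aux N (6 * h) (3 * h) (by omega) hchoose
  have not0 : ¬ ∃ B : Fin N → Fin (6 * h), ∀ u v, u ≠ v → B u ≠ B v := by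
    rintro ⟨B, hB⟩
    have inj : Function.Injective B := by
      intro a b hab
      by_contra hne
      exact hB a b hne hab
    have := Fintype.card_le_of_injective _ inj
    simp only [Fintype.card_fin] at this
    omega
  refine ⟨?_, ⟨Bp, hBp⟩, not0⟩
  have mem1 : 1 ∈ {t | ∃ B, IsOneSided N (6 * h) t B} := by
    refine ⟨fun g => Bp (g 0) (g 1), ?_⟩
    intro x hx
    have h0 : x 0 ≠ x 1 := by simpa using hx 0
    have h1 : x 1 ≠ x 2 := by simpa using hx 1
    exact hBp (x 0) (x 1) (x 2) h0 h1
  have notmem0 : 0 ∉ {t | ∃ B, IsOneSided N (6 * h) t B} := by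
    rintro ⟨B, hB⟩
    apply not0
    refine ⟨fun a => B (fun _ => a), ?_⟩
    intro a b hab
    have hx : ∀ i : Fin 1, (![a, b] : Fin 2 → Fin N) i.castSucc ≠ ![a, b] i.succ := by
      intro i; fin_cases i; simpa using hab
    have hne := hB ![a, b] hx
    have e1 : (fun i : Fin 1 => (![a, b] : Fin 2 → Fin N) i.castSucc) = fun _ => a := by
      funext i; fin_cases i; rfl
    have e2 : (fun i : Fin 1 => (![a, b] : Fin 2 → Fin N) i.succ) = fun _ => b := by
      funext i; fin_cases i; rfl
    rw [e1, e2] at hne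
    exact hne
  unfold T
  have hSne : Set.Nonempty {t | ∃ B, IsOneSided N (6 * h) t B} := ⟨1, mem1⟩
  have hmem := Nat.sInf_mem hSne
  have hle : sInf {t | ∃ B, IsOneSided N (6 * h) t B} ≤ 1 := Nat.sInf_le mem1
  have hne0 : sInf {t | ∃ B, IsOneSided N (6 * h) t B} ≠ 0 := by
    intro h0; rw [h0] at hmem; exact notmem0 hmem
  omega
end

section
/- For every integer r ≥ 0, T((3/2)·2↑↑(r+4), (3/2)·2↑↑4) ≤ r; that is, there exists a one-sided colour reduction algorithm from (3/2)·2↑↑(r+4) colours to (3/2)·65536 = 98304 colours running in r rounds. -/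
-- one-round lemma
lemma one_round {n c : ℕ} (hc : 0 < c) (h : n ≤ c.choose (c / 2)) :
    ∃ B, IsOneSided n c 1 B := by
  classical
  have hcard : n ≤ Fintype.card {s : Finset (Fin c) // s.card = c / 2} := by
    rw [Fintype.card_finset_len, Fintype.card_fin]
    exact h
  obtain ⟨f⟩ : Nonempty (Fin n ↪ {s : Finset (Fin c) // s.card = c / 2}) := by
    have := Function.Embedding.nonempty_of_card_le (α := Fin n)
      (β := {s : Finset (Fin c) // s.card = c / 2})
    simp only [Fintype.card_fin] at this
    exact this hcard
  set S : Fin n → Finset (Fin c) := fun x => (f x).1 with hS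
  have hne : ∀ x y : Fin n, x ≠ y → (S x \ S y).Nonempty := by
    intro x y hxy
    rw [Finset.sdiff_nonempty]
    intro hsub
    have : S x = S y := Finset.eq_of_subset_of_card_le hsub (by rw [(f x).2, (f y).2])
    exact hxy (f.injective (Subtype.ext this))
  have c0 : Nonempty (Fin c) := ⟨⟨0, hc⟩⟩
  set pick : Fin n → Fin n → Fin c := fun x y =>
    if hxy : x ≠ y then (hne x y hxy).choose else Classical.arbitrary _ with hpick
  have hpick_mem : ∀ x y, x ≠ y → pick x y ∈ S x \ S y := by
    intro x y hxy
    simp only [hpick, dif_pos hxy]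
    exact (hne x y hxy).choose_spec
  refine ⟨fun v => pick (v 0) (v 1), ?_⟩
  intro x hx hEq
  simp only at hEq
  have e00 : (fun i : Fin 2 => x i.castSucc) 0 = x 0 := rfl
  have h01 : x 0 ≠ x 1 := by
    have := hx 0
    simpa using this
  have h12 : x 1 ≠ x 2 := by
    have := hx 1
    simpa using this
  have hA : pick (x 0) (x 1) ∈ S (x 0) \ S (x 1) := hpick_mem _ _ h01
  have hB : pick (x 1) (x 2) ∈ S (x 1) \ S (x 2) := hpick_mem _ _ h12
  have hEq' : pick (x 0) (x 1) = pick (x 1) (x 2) := hEq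
  rw [hEq'] at hA
  rw [Finset.mem_sdiff] at hA hB
  exact hA.2 hB.1

-- composition
lemma compose {n m c t : ℕ} {B1 : (Fin 2 → Fin n) → Fin m}
    {B2 : (Fin (t + 1) → Fin m) → Fin c}
    (h1 : IsOneSided n m 1 B1) (h2 : IsOneSided m c t B2) :
    ∃ B, IsOneSided n c (t + 1) B := by
  refine ⟨fun v => B2 (fun i => B1 ![v i.castSucc, v i.succ]), ?_⟩
  intro x hx
  set y : Fin (t + 1 + 1) → Fin m := fun i => B1 ![x i.castSucc, x i.succ] with hy
  have hyadj : ∀ i : Fin (t + 1), y i.castSucc ≠ y i.succ := by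
    intro i
    have key := h1 ![x i.castSucc.castSucc, x i.castSucc.succ, x i.succ.succ] ?_
    · have e1 : (fun j : Fin 2 =>
          (![x i.castSucc.castSucc, x i.castSucc.succ, x i.succ.succ] : Fin 3 → Fin n) j.castSucc)
          = ![x i.castSucc.castSucc, x i.castSucc.succ] := by
        funext j; fin_cases j <;> rfl
      have e2 : (fun j : Fin 2 =>
          (![x i.castSucc.castSucc, x i.castSucc.succ, x i.succ.succ] : Fin 3 → Fin n) j.succ)
          = ![x i.succ.castSucc, x i.succ.succ] := by
        funext j; fin_cases j <;> simp
      rw [e1, e2] at key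
      simpa [hy] using key
    · intro j
      fin_cases j
      · simpa using hx i.castSucc
      · have := hx i.succ
        simpa using this
  have main := h2 y hyadj
  have e1 : (fun i : Fin (t + 1) => B1 ![(fun i' : Fin (t+2) => x i'.castSucc) i.castSucc,
      (fun i' : Fin (t+2) => x i'.castSucc) i.succ]) = fun i => y i.castSucc := rfl
  have e2 : (fun i : Fin (t + 1) => B1 ![(fun i' : Fin (t+2) => x i'.succ) i.castSucc,
      (fun i' : Fin (t+2) => x i'.succ) i.succ]) = fun i => y i.succ := rfl
  show B2 _ ≠ B2 _
  rw [e1, e2]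
  exact main

lemma tpow_pos (k : ℕ) : 0 < tpow k := by
  cases k with
  | zero => simp [tpow]
  | succ i => exact Nat.pow_pos (by norm_num)

lemma tpow_ge_16 (s : ℕ) : 16 ≤ tpow (s + 3) := by
  induction s with
  | zero => simp [tpow]
  | succ i ih =>
    show 16 ≤ 2 ^ tpow (i + 3)
    calc 16 ≤ tpow (i + 3) := ih
    _ ≤ 2 ^ tpow (i + 3) := (Nat.lt_two_pow_self (n := _)).le

lemma aux_exp (K : ℕ) : K + 6 ≤ 2 ^ (K + 3) := by
  induction K with
  | zero => norm_num
  | succ i ih =>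
    calc i + 1 + 6 ≤ 2 * (i + 6) := by omega
    _ ≤ 2 * 2 ^ (i + 3) := Nat.mul_le_mul_left _ ih
    _ = 2 ^ (i + 1 + 3) := by ring

lemma numeric (s : ℕ) :
    3 * tpow (s + 5) / 2 ≤ (3 * tpow (s + 4) / 2).choose (3 * tpow (s + 4) / 2 / 2) := by
  obtain ⟨K, hK⟩ : ∃ K, tpow (s + 3) = K + 4 := ⟨tpow (s + 3) - 4, by have := tpow_ge_16 s; omega⟩
  have h4 : tpow (s + 4) = 2 ^ (K + 4) := by show 2 ^ tpow (s+3) = _; rw [hK]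
  have h5 : tpow (s + 5) = 2 ^ 2 ^ (K + 4) := by show 2 ^ tpow (s+4) = _; rw [h4]
  have hc : 3 * tpow (s + 4) / 2 = 3 * 2 ^ (K + 3) * 2 / 2 := by
    rw [h4]; congr 1; ring
  rw [hc, Nat.mul_div_cancel _ (by norm_num)]
  have hc2 : 3 * 2 ^ (K + 3) / 2 = 3 * 2 ^ (K + 2) := by
    have : 3 * 2 ^ (K + 3) = 3 * 2 ^ (K + 2) * 2 := by ring
    rw [this, Nat.mul_div_cancel _ (by norm_num)]
  rw [hc2]
  -- central binom
  set N : ℕ := 3 * 2 ^ (K + 2) with hN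
  have hNpos : 0 < N := by positivity
  have hchoose : (3 * 2 ^ (K + 3)).choose N = Nat.centralBinom N := by
    rw [Nat.centralBinom]
    congr 1
    rw [hN]; ring
  rw [hchoose]
  have hlower : 4 ^ N ≤ 2 * N * Nat.centralBinom N :=
    Nat.four_pow_le_two_mul_self_mul_centralBinom N hNpos
  have hn : 3 * tpow (s + 5) / 2 ≤ 2 ^ (2 ^ (K + 4) + 1) := by
    rw [h5]
    calc 3 * 2 ^ 2 ^ (K + 4) / 2 ≤ 4 * 2 ^ 2 ^ (K + 4) / 2 := by
          apply Nat.div_le_div_right; apply Nat.mul_le_mul_right; norm_num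
    _ = 2 * 2 ^ 2 ^ (K + 4) := by omega
    _ = 2 ^ (2 ^ (K + 4) + 1) := by rw [pow_succ]; ring
  refine le_trans hn ?_
  -- show 2 ^ (2^(K+4)+1) ≤ centralBinom N
  have key : 2 ^ (2 ^ (K + 4) + 1) * (2 * N) ≤ 4 ^ N := by
    have h1 : 2 * N ≤ 2 ^ (K + 5) := by
      rw [hN]
      calc 2 * (3 * 2 ^ (K + 2)) ≤ 2 * (4 * 2 ^ (K + 2)) := by
            apply Nat.mul_le_mul_left; apply Nat.mul_le_mul_right; norm_num
      _ = 2 ^ (K + 5) := by ring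
    calc 2 ^ (2 ^ (K + 4) + 1) * (2 * N) ≤ 2 ^ (2 ^ (K + 4) + 1) * 2 ^ (K + 5) :=
          Nat.mul_le_mul_left _ h1
    _ = 2 ^ (2 ^ (K + 4) + 1 + (K + 5)) := by rw [← pow_add]
    _ ≤ 2 ^ (2 * N) := by
        apply Nat.pow_le_pow_right (by norm_num)
        have h2 : 2 * N = 2 ^ (K + 4) + 2 ^ (K + 3) := by
          rw [hN]; ring
        have h3 := aux_exp K
        omega
    _ = 4 ^ N := by rw [pow_mul]; norm_num
  have hpos2N : 0 < 2 * N := by positivity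
  have := le_trans key hlower
  calc 2 ^ (2 ^ (K + 4) + 1)
      = 2 ^ (2 ^ (K + 4) + 1) * (2 * N) / (2 * N) := by rw [Nat.mul_div_cancel _ hpos2N]
  _ ≤ 2 * N * Nat.centralBinom N / (2 * N) := Nat.div_le_div_right this
  _ = Nat.centralBinom N := by rw [Nat.mul_div_cancel_left _ hpos2N]

lemma exists_alg (r : ℕ) :
    ∃ B, IsOneSided (3 * tpow (r + 4) / 2) (3 * tpow 4 / 2) r B := by
  induction r with
  | zero =>
    refine ⟨fun v => v 0, ?_⟩
    intro x hx
    have h01 : x 0 ≠ x 1 := by simpa using hx 0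
    simpa using h01
  | succ r ih =>
    obtain ⟨B2, hB2⟩ := ih
    have hcpos : 0 < 3 * tpow (r + 4) / 2 := by
      have h16 : 16 ≤ tpow (r + 4) := le_trans (tpow_ge_16 r) (by
        have : tpow (r + 4) = 2 ^ tpow (r + 3) := rfl
        calc tpow (r + 3) ≤ 2 ^ tpow (r+3) := (Nat.lt_two_pow_self (n := _)).le
        _ = tpow (r + 4) := rfl)
      omega
    have hnum := numeric r
    have : (r + 1) + 4 = r + 5 := by ring
    rw [this]
    obtain ⟨B1, hB1⟩ := one_round hcpos hnum
    exact compose hB1 hB2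

/-- For every `r ≥ 0`, `T((3/2)·2↑↑(r+4), (3/2)·2↑↑4) ≤ r`. -/
theorem stmt_7 (r : ℕ) :
    T (3 * tpow (r + 4) / 2) (3 * tpow 4 / 2) ≤ r := by
  exact Nat.sInf_le (exists_alg r)
end

section
/- T((3/2)·2↑↑4, 3) ≤ 5; that is, there exists a one-sided colour reduction algorithm from 98304 colours to 3 colours running in 5 rounds. -/
/-- ℕ-sequence version of one-sidedness. -/
def OS (n c t : ℕ) (B : (Fin (t + 1) → Fin n) → Fin c) : Prop :=
  ∀ x : ℕ → Fin n, (∀ i, x i ≠ x (i + 1)) →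
    B (fun i => x i.val) ≠ B (fun i => x (i.val + 1))

lemma os_of_isOneSided {n c t : ℕ} {B : (Fin (t + 1) → Fin n) → Fin c}
    (h : IsOneSided n c t B) : OS n c t B := by
  intro x hx
  have := h (fun i : Fin (t + 1 + 1) => x i.val) (fun i => by
    simpa using hx i.val)
  simpa using this

lemma isOneSided_of_os {n c t : ℕ} (hn : 2 ≤ n) {B : (Fin (t + 1) → Fin n) → Fin c}
    (h : OS n c t B) : IsOneSided n c t B := by
  intro x hx
  set a : Fin n := x (Fin.last (t + 1)) with ha
  set b : Fin n := if a = ⟨0, by omega⟩ then ⟨1, by omega⟩ else ⟨0, by omega⟩ with hbdef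
  have hb : b ≠ a := by
    rcases eq_or_ne a ⟨0, by omega⟩ with h0 | h0
    · rw [hbdef, if_pos h0, h0]; simp [Fin.ext_iff]
    · rw [hbdef, if_neg h0]; exact fun hh => h0 hh.symm
  set x' : ℕ → Fin n := fun i =>
    if hi : i < t + 2 then x ⟨i, hi⟩ else if (i - t) % 2 = 0 then b else a with hx'
  have hlt : ∀ i (hi : i < t + 2), x' i = x ⟨i, hi⟩ := by
    intro i hi; simp [hx', hi]
  have htail : ∀ i, ¬ i < t + 2 → x' i = if (i - t) % 2 = 0 then b else a := by
    intro i hi; simp [hx', hi]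
  have hadj : ∀ i, x' i ≠ x' (i + 1) := by
    intro i
    by_cases h1 : i + 1 < t + 2
    · rw [hlt i (by omega), hlt (i + 1) h1]
      have := hx ⟨i, by omega⟩
      simpa [Fin.castSucc, Fin.succ, Fin.ext_iff] using this
    · by_cases h2 : i < t + 2
      · have hi : i = t + 1 := by omega
        rw [hlt i h2, htail (i + 1) h1, if_pos (by omega)]
        have : x ⟨i, h2⟩ = a := by
          rw [ha]; congr 1; simp [Fin.last, Fin.ext_iff, hi]
        rw [this]
        exact fun hh => hb hh.symm
      · rw [htail i h2, htail (i + 1) h1]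
        have hpar : (i - t) % 2 = 0 ↔ ¬ ((i + 1 - t) % 2 = 0) := by omega
        rcases Nat.eq_zero_or_pos ((i - t) % 2) with hp | hp
        · rw [if_pos hp, if_neg (hpar.mp hp)]; exact hb
        · have hp' : ¬ (i - t) % 2 = 0 := by omega
          rw [if_neg hp', if_pos (by omega)]
          exact fun hh => hb hh.symm
  have := h x' hadj
  have e1 : (fun i : Fin (t + 1) => x' i.val) = fun i => x i.castSucc := by
    funext i
    rw [hlt i.val (by omega)]
    congr 1
  have e2 : (fun i : Fin (t + 1) => x' (i.val + 1)) = fun i => x i.succ := by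
    funext i
    rw [hlt (i.val + 1) (by omega)]
    congr 1
  rw [e1, e2] at this
  exact this

lemma os_comp {n m c t1 t2 : ℕ} {B1 : (Fin (t1 + 1) → Fin n) → Fin m}
    {B2 : (Fin (t2 + 1) → Fin m) → Fin c}
    (h1 : OS n m t1 B1) (h2 : OS m c t2 B2) :
    ∃ B : (Fin (t1 + t2 + 1) → Fin n) → Fin c, OS n c (t1 + t2) B := by
  refine ⟨fun w => B2 (fun j => B1 (fun i => w ⟨i.val + j.val, by omega⟩)), ?_⟩
  intro x hx
  set y : ℕ → Fin m := fun j => B1 (fun i : Fin (t1 + 1) => x (i.val + j)) with hy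
  have hyadj : ∀ j, y j ≠ y (j + 1) := by
    intro j
    have := h1 (fun k => x (k + j)) (fun k => by
      show x (k + j) ≠ x (k + 1 + j)
      rw [show k + 1 + j = k + j + 1 by omega]
      exact hx (k + j))
    have e : (fun i : Fin (t1 + 1) => x (i.val + 1 + j)) =
        fun i : Fin (t1 + 1) => x (i.val + (j + 1)) := by
      funext i; congr 1; omega
    simpa [hy, e] using this
  have := h2 y hyadj
  have e1 : (fun j : Fin (t2 + 1) => y j.val) =
      fun j : Fin (t2 + 1) => B1 (fun i : Fin (t1 + 1) =>
        (fun i' : Fin (t1 + t2 + 1) => x i'.val) ⟨i.val + j.val, by omega⟩) := rfl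
  have e2 : (fun j : Fin (t2 + 1) => y (j.val + 1)) =
      fun j : Fin (t2 + 1) => B1 (fun i : Fin (t1 + 1) =>
        (fun i' : Fin (t1 + t2 + 1) => x (i'.val + 1)) ⟨i.val + j.val, by omega⟩) := by
    rfl
  rw [e1, e2] at this
  exact this

lemma antichain_os (n c k : ℕ) (hc : 0 < c) (h : n ≤ c.choose k) :
    ∃ B : (Fin (1 + 1) → Fin n) → Fin c, OS n c 1 B := by
  obtain ⟨e⟩ := Function.Embedding.nonempty_of_card_le
    (α := Fin n) (β := {s : Finset (Fin c) // s.card = k})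
    (by rw [Fintype.card_fin, Fintype.card_finset_len, Fintype.card_fin]; exact h)
  set S : Fin n → Finset (Fin c) := fun a => (e a).1 with hS
  have hkey : ∀ a b : Fin n, a ≠ b → (S a \ S b).Nonempty := by
    intro a b hab
    by_contra hemp
    have hsub : S a ⊆ S b := by
      intro u hu
      by_contra hu2
      exact hemp ⟨u, Finset.mem_sdiff.mpr ⟨hu, hu2⟩⟩
    have : S a = S b := Finset.eq_of_subset_of_card_le hsub
      (le_of_eq ((e b).2.trans (e a).2.symm))
    exact hab (e.injective (Subtype.ext this))
  have main : ∀ p q r : Fin n, p ≠ q → q ≠ r →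
      (if h1 : (S p \ S q).Nonempty then (S p \ S q).min' h1 else ⟨0, hc⟩) ≠
      (if h2 : (S q \ S r).Nonempty then (S q \ S r).min' h2 else ⟨0, hc⟩) := by
    intro p q r hpq hqr
    rw [dif_pos (hkey p q hpq), dif_pos (hkey q r hqr)]
    intro heq
    have m1 := (S p \ S q).min'_mem (hkey p q hpq)
    have m2 := (S q \ S r).min'_mem (hkey q r hqr)
    rw [heq] at m1
    rw [Finset.mem_sdiff] at m1 m2
    exact m1.2 m2.1
  refine ⟨fun w => if hne : (S (w 0) \ S (w 1)).Nonempty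
    then (S (w 0) \ S (w 1)).min' hne else ⟨0, hc⟩, ?_⟩
  intro x hx
  exact main _ _ _ (hx 0) (hx 1)

def g43 : Fin 4 → Fin 4 → Fin 4 → Fin 3 := fun a b c =>
  match a, b, c with
  | 0, 1, 0 => 0 | 0, 1, 2 => 0 | 0, 1, 3 => 0
  | 0, 2, 0 => 0 | 0, 2, 1 => 1 | 0, 2, 3 => 0
  | 0, 3, 0 => 0 | 0, 3, 1 => 1 | 0, 3, 2 => 1
  | 1, 0, 1 => 1 | 1, 0, 2 => 2 | 1, 0, 3 => 2
  | 1, 2, 0 => 1 | 1, 2, 1 => 1 | 1, 2, 3 => 2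
  | 1, 3, 0 => 1 | 1, 3, 1 => 1 | 1, 3, 2 => 1
  | 2, 0, 1 => 2 | 2, 0, 2 => 2 | 2, 0, 3 => 2
  | 2, 1, 0 => 0 | 2, 1, 2 => 0 | 2, 1, 3 => 0
  | 2, 3, 0 => 1 | 2, 3, 1 => 1 | 2, 3, 2 => 1
  | 3, 0, 1 => 2 | 3, 0, 2 => 2 | 3, 0, 3 => 2
  | 3, 1, 0 => 0 | 3, 1, 2 => 0 | 3, 1, 3 => 0
  | 3, 2, 0 => 0 | 3, 2, 1 => 2 | 3, 2, 3 => 0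
  | _, _, _ => 0

def B43 : (Fin (2 + 1) → Fin 4) → Fin 3 := fun w => g43 (w 0) (w 1) (w 2)

set_option maxRecDepth 100000 in
lemma b43 : IsOneSided 4 3 2 B43 := by
  unfold IsOneSided B43
  decide


/-- `T((3/2)·2↑↑4, 3) ≤ 5`. -/
theorem stmt_8 : T (3 * tpow 4 / 2) 3 ≤ 5 := by
  have hn : 3 * tpow 4 / 2 = 98304 := by norm_num [tpow]
  rw [hn]
  obtain ⟨B1, h1⟩ := antichain_os 98304 20 10 (by norm_num) (by decide)
  obtain ⟨B2, h2⟩ := antichain_os 20 6 3 (by norm_num) (by decide)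
  obtain ⟨B3, h3⟩ := antichain_os 6 4 2 (by norm_num) (by decide)
  have h4 : OS 4 3 2 B43 := os_of_isOneSided b43
  obtain ⟨B12, h12⟩ := os_comp h1 h2
  obtain ⟨B13, h13⟩ := os_comp h12 h3
  obtain ⟨B, hB⟩ := os_comp h13 h4
  have hfin : IsOneSided 98304 3 5 B := isOneSided_of_os (by norm_num) hB
  exact Nat.sInf_le ⟨B, hfin⟩
end

section
/- For every integer h > 1, T(2↑↑h, 3) ≤ T(2↑↑h + 1, 3) ≤ h + 1; that is, there exists a one-sided colour reduction algorithm from 2↑↑h + 1 colours to 3 colours running in h + 1 rounds. -/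
namespace Stmt9Aux

/-- Lift of a vertex set: nonempty finite sets of vertices. -/
def HV (V : Type) : Type := {s : Finset V // s.Nonempty}

/-- Lift of a relation: `X` beats `Y` if some member of `X` relates to all of `Y`. -/
def HR {V : Type} (R : V → V → Prop) : HV V → HV V → Prop :=
  fun X Y => ∃ a ∈ X.1, ∀ b ∈ Y.1, R a b

instance {V : Type} [DecidableEq V] : DecidableEq (HV V) :=
  inferInstanceAs (DecidableEq {s : Finset V // s.Nonempty})

instance {V : Type} [DecidableEq V] (R : V → V → Prop) [DecidableRel R] :
    DecidableRel (HR R) := fun X Y =>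
  decidable_of_iff (∃ a ∈ X.1, ∀ b ∈ Y.1, R a b) Iff.rfl

/-- Iterated lift, peeling from the inside. -/
def IterV : Type → ℕ → Type
  | V, 0 => V
  | V, j + 1 => IterV (HV V) j

def IterR : ∀ (V : Type) (_ : V → V → Prop) (j : ℕ), IterV V j → IterV V j → Prop
  | _, R, 0 => R
  | V, R, j + 1 => IterR (HV V) (HR R) j

/-- An injective clique labelling of size `q`. -/
def CliqueLab (V : Type) (R : V → V → Prop) (q : ℕ) : Prop :=
  ∃ f : Fin q → V, Function.Injective f ∧ ∀ i j : Fin q, i ≠ j → R (f i) (f j)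

/-- A valid labelling of `(t+1)`-windows by vertices of `(V, R)`. -/
def Valid (n : ℕ) (V : Type) (R : V → V → Prop) (t : ℕ)
    (L : (Fin (t + 1) → Fin n) → V) : Prop :=
  ∀ x : Fin (t + 1 + 1) → Fin n,
    (∀ i : Fin (t + 1), x i.castSucc ≠ x i.succ) →
      R (L fun i => x i.castSucc) (L fun i => x i.succ)

lemma fin_sc {k : ℕ} (i : Fin k) : (i.castSucc).succ = (i.succ).castSucc := by
  ext; simp

lemma windowStep {n : ℕ} {V : Type} {R : V → V → Prop} {t : ℕ}
    (h : ∃ L, Valid n (HV V) (HR R) t L) : ∃ L', Valid n V R (t + 1) L' := by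
  classical
  obtain ⟨L, hL⟩ := h
  set F : (Fin (t + 2) → Fin n) → (Fin (t + 1) → Fin n) :=
    fun y i => y i.castSucc with hF
  set Bk : (Fin (t + 2) → Fin n) → (Fin (t + 1) → Fin n) :=
    fun y i => y i.succ with hBk
  set L' : (Fin (t + 2) → Fin n) → V := fun y =>
    if h : (∀ i : Fin (t + 1), y i.castSucc ≠ y i.succ) then (hL y h).choose
    else (L (F y)).2.choose with hL'
  have mem : ∀ y, L' y ∈ (L (F y)).1 := by
    intro y
    by_cases h : (∀ i : Fin (t + 1), y i.castSucc ≠ y i.succ)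
    · simp only [hL', dif_pos h]
      exact (hL y h).choose_spec.1
    · simp only [hL', dif_neg h]
      exact (L (F y)).2.choose_spec
  refine ⟨L', ?_⟩
  intro x hx
  have h1 : ∀ i : Fin (t + 1),
      (fun i => x i.castSucc) (Fin.castSucc i) ≠ (fun i => x i.castSucc) (Fin.succ i) :=
    fun i => hx i.castSucc
  have e1 : L' (fun i => x i.castSucc) = (hL (fun i => x i.castSucc) h1).choose := by
    simp only [hL', dif_pos h1]
  have spec := (hL (fun i => x i.castSucc) h1).choose_spec.2
  rw [e1]
  exact spec (L' (fun i => x i.succ)) (mem (fun i => x i.succ))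

lemma iterWindows {n : ℕ} (j : ℕ) : ∀ (V : Type) (R : V → V → Prop) (t : ℕ),
    (∃ L, Valid n (IterV V j) (IterR V R j) t L) → ∃ L, Valid n V R (t + j) L := by
  induction j with
  | zero => intro V R t h; exact h
  | succ j ih =>
    intro V R t h
    exact windowStep (ih (HV V) (HR R) t h)

lemma valid_cast {n : ℕ} {V : Type} {R : V → V → Prop} {a b : ℕ} (hab : a = b) :
    (∃ L, Valid n V R a L) → ∃ L, Valid n V R b L := by
  subst hab; exact id

lemma clique_valid {n : ℕ} {V : Type} {R : V → V → Prop} {q : ℕ}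
    (h : CliqueLab V R q) (hn : n ≤ q) : ∃ L, Valid n V R 0 L := by
  obtain ⟨f, _, hf⟩ := h
  refine ⟨fun xv => f (Fin.castLE hn (xv 0)), ?_⟩
  intro x hx
  exact hf _ _ fun he => hx 0 (Fin.castLE_injective hn he)

lemma clique_mono {V : Type} {R : V → V → Prop} {q q' : ℕ}
    (h : CliqueLab V R q) (hq : q' ≤ q) : CliqueLab V R q' := by
  obtain ⟨f, finj, hf⟩ := h
  exact ⟨fun i => f (Fin.castLE hq i), fun a b hab => Fin.castLE_injective hq (finj hab),
    fun i j hij => hf _ _ fun he => hij (Fin.castLE_injective hq he)⟩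

lemma stepBinom {V : Type} {R : V → V → Prop} {q k N : ℕ}
    (h : CliqueLab V R q) (hk : 1 ≤ k) (hN : N ≤ q.choose k) :
    CliqueLab (HV V) (HR R) N := by
  classical
  obtain ⟨f, finj, hf⟩ := h
  obtain ⟨e⟩ : Nonempty (Fin N ↪ {s : Finset (Fin q) // s.card = k}) := by
    apply Function.Embedding.nonempty_of_card_le
    simpa [Fintype.card_finset_len] using hN
  set femb : Fin q ↪ V := ⟨f, finj⟩ with hfemb
  refine ⟨fun a => ⟨(e a).1.map femb, ?_⟩, ?_, ?_⟩
  · rw [← Finset.card_pos, Finset.card_map, (e a).2]; omega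
  · intro a b hab
    apply e.injective
    apply Subtype.ext
    have : (e a).1.map femb = (e b).1.map femb := congrArg Subtype.val hab
    exact Finset.map_injective femb this
  · intro a b hab
    have hne : (e a).1 ≠ (e b).1 := fun hh => hab (e.injective (Subtype.ext hh))
    have hnsub : ¬(e a).1 ⊆ (e b).1 := by
      intro hsub
      exact hne (Finset.eq_of_subset_of_card_le hsub (by rw [(e a).2, (e b).2]))
    obtain ⟨i, hia, hib⟩ := Finset.not_subset.mp hnsub
    refine ⟨f i, Finset.mem_map_of_mem _ hia, ?_⟩
    intro y hy
    obtain ⟨j, hj, rfl⟩ := Finset.mem_map.mp hy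
    exact hf i j fun hij => hib (hij ▸ hj)

lemma stepPow {V : Type} {R : V → V → Prop} {q m : ℕ}
    (h : CliqueLab V R q) (hm : 1 ≤ m) (hq : 2 * m ≤ q) :
    CliqueLab (HV V) (HR R) (2 ^ m) := by
  classical
  obtain ⟨f, finj, hf⟩ := h
  set femb : Fin q ↪ V := ⟨f, finj⟩ with hfemb
  have idxlt : ∀ (i : Fin m) (b : Fin 2), 2 * i.1 + b.1 < q := by
    intro i b
    have := i.2; have := b.2; omega
  set idx : Fin m → Fin 2 → Fin q := fun i b => ⟨2 * i.1 + b.1, idxlt i b⟩ with hidx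
  have idxinj : ∀ (i j : Fin m) (b c : Fin 2), idx i b = idx j c → i = j ∧ b = c := by
    intro i j b c hh
    have hv : 2 * i.1 + b.1 = 2 * j.1 + c.1 := congrArg Fin.val hh
    have := b.2; have := c.2
    constructor
    · ext; omega
    · ext; omega
  haveI : Nonempty (Fin m) := ⟨⟨0, hm⟩⟩
  set E := (finFunctionFinEquiv (m := 2) (n := m)).symm with hE
  set S : (Fin m → Fin 2) → Finset (Fin q) :=
    fun g => Finset.univ.image (fun i : Fin m => idx i (g i)) with hS
  refine ⟨fun a => ⟨(S (E a)).map femb, ?_⟩, ?_, ?_⟩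
  · rw [Finset.map_nonempty]
    exact (Finset.univ_nonempty).image _
  · intro a b hab
    have hmap : (S (E a)).map femb = (S (E b)).map femb := congrArg Subtype.val hab
    have hSS : S (E a) = S (E b) := Finset.map_injective femb hmap
    have hfun : E a = E b := by
      funext i
      have hmem : idx i (E a i) ∈ S (E b) := by
        rw [← hSS]; exact Finset.mem_image_of_mem _ (Finset.mem_univ i)
      obtain ⟨j, _, hj⟩ := Finset.mem_image.mp hmem
      obtain ⟨rfl, hbc⟩ := idxinj j i (E b j) (E a i) hj
      exact hbc.symm
    exact E.injective hfun
  · intro a b hab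
    have hgne : E a ≠ E b := fun hh => hab (E.injective hh)
    obtain ⟨i, hi⟩ := Function.ne_iff.mp hgne
    refine ⟨f (idx i (E a i)), Finset.mem_map_of_mem _
      (Finset.mem_image_of_mem _ (Finset.mem_univ i)), ?_⟩
    intro y hy
    obtain ⟨z, hz, rfl⟩ := Finset.mem_map.mp hy
    obtain ⟨j, _, rfl⟩ := Finset.mem_image.mp hz
    apply hf
    intro he
    obtain ⟨rfl, heq⟩ := idxinj _ _ _ _ he
    exact hi heq


/-! ### Explicit base structure: a 4-clique at level 2 -/

instance : DecidableRel (@Ne (Fin 3)) := fun a b => inferInstanceAs (Decidable ¬(a = b))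

def s0 : HV (Fin 3) := ⟨{0}, by decide⟩
def s1 : HV (Fin 3) := ⟨{1}, by decide⟩
def s2 : HV (Fin 3) := ⟨{2}, by decide⟩
def d01 : HV (Fin 3) := ⟨{0, 1}, by decide⟩
def d02 : HV (Fin 3) := ⟨{0, 2}, by decide⟩
def d12 : HV (Fin 3) := ⟨{1, 2}, by decide⟩

def A1 : HV (HV (Fin 3)) := ⟨{d01}, Finset.singleton_nonempty _⟩
def A2 : HV (HV (Fin 3)) := ⟨{d02}, Finset.singleton_nonempty _⟩
def A3 : HV (HV (Fin 3)) := ⟨{d12}, Finset.singleton_nonempty _⟩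
def A4 : HV (HV (Fin 3)) := ⟨{s0, s1, s2}, by decide⟩

lemma clique2 : CliqueLab (HV (HV (Fin 3))) (HR (HR Ne)) 4 :=
  ⟨![A1, A2, A3, A4], by decide, by decide⟩

lemma choose2010 : Nat.choose 20 10 = 184756 := by
  rw [Nat.choose_eq_descFactorial_div_factorial]
  decide

lemma clique3 : CliqueLab (IterV (Fin 3) 3) (IterR (Fin 3) Ne 3) 6 :=
  stepBinom (k := 2) clique2 (by norm_num) (by decide)

lemma clique4 : CliqueLab (IterV (Fin 3) 4) (IterR (Fin 3) Ne 4) 20 :=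
  stepBinom (k := 3) clique3 (by norm_num) (by decide)

lemma clique5 : CliqueLab (IterV (Fin 3) 5) (IterR (Fin 3) Ne 5) 184756 :=
  stepBinom (k := 10) clique4 (by norm_num) (le_of_eq choose2010.symm)

lemma tpow_pos : ∀ s, 1 ≤ tpow s
  | 0 => le_refl 1
  | s + 1 => Nat.one_le_two_pow

lemma tail (j : ℕ) : ∀ (V : Type) (R : V → V → Prop) (s q : ℕ),
    CliqueLab V R q → 2 * tpow s + 4 ≤ q →
    ∃ q', 2 * tpow (s + j) + 4 ≤ q' ∧ CliqueLab (IterV V j) (IterR V R j) q' := by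
  induction j with
  | zero =>
    intro V R s q hcl hb
    exact ⟨q, by simpa using hb, hcl⟩
  | succ j ih =>
    intro V R s q hcl hb
    have t1 : 1 ≤ tpow s := tpow_pos s
    have hm : 1 ≤ q / 2 := by omega
    have h2q : 2 * (q / 2) ≤ q := by omega
    have hstep := stepPow hcl hm h2q
    have hbound : 2 * tpow (s + 1) + 4 ≤ 2 ^ (q / 2) := by
      have h1 : tpow s + 2 ≤ q / 2 := by omega
      have h2 : (2 : ℕ) ^ (tpow s + 2) ≤ 2 ^ (q / 2) :=
        Nat.pow_le_pow_right (by norm_num) h1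
      have h3 : (2 : ℕ) ^ (tpow s + 2) = 4 * 2 ^ tpow s := by ring
      have h4 : 2 ≤ 2 ^ tpow s := by
        calc (2 : ℕ) = 2 ^ 1 := rfl
          _ ≤ 2 ^ tpow s := Nat.pow_le_pow_right (by norm_num) t1
      have h5 : tpow (s + 1) = 2 ^ tpow s := rfl
      omega
    obtain ⟨q', hq', hcl'⟩ := ih (HV V) (HR R) (s + 1) (2 ^ (q / 2)) hstep hbound
    refine ⟨q', ?_, hcl'⟩
    have harr : s + 1 + j = s + (j + 1) := by omega
    rwa [harr] at hq'

lemma exists_good (h : ℕ) (hh : 1 < h) :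
    ∃ B, IsOneSided (tpow h + 1) 3 (h + 1) B := by
  have key : ∃ L, Valid (tpow h + 1) (Fin 3) Ne (h + 1) L := by
    rcases lt_or_ge h 5 with h5 | h5
    · interval_cases h
      · exact valid_cast (show 0 + 3 = 2 + 1 by norm_num)
          (iterWindows 3 (Fin 3) Ne 0 (clique_valid clique3 (by decide)))
      · exact valid_cast (show 0 + 4 = 3 + 1 by norm_num)
          (iterWindows 4 (Fin 3) Ne 0 (clique_valid clique4 (by decide)))
      · exact valid_cast (show 0 + 5 = 4 + 1 by norm_num)
          (iterWindows 5 (Fin 3) Ne 0 (clique_valid clique5 (by decide)))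
    · obtain ⟨q', hb, hcl⟩ := tail (h - 4) (IterV (Fin 3) 5) (IterR (Fin 3) Ne 5)
        4 184756 clique5 (by decide)
      have harr : 4 + (h - 4) = h := by omega
      rw [harr] at hb
      have hb' : tpow h + 1 ≤ q' := by have := tpow_pos h; omega
      have v1 := iterWindows (h - 4) (IterV (Fin 3) 5) (IterR (Fin 3) Ne 5) 0
        (clique_valid hcl hb')
      have v2 := iterWindows 5 (Fin 3) Ne (0 + (h - 4)) v1
      exact valid_cast (by omega) v2
  obtain ⟨L, hL⟩ := key
  exact ⟨L, fun x hx => hL x hx⟩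

end Stmt9Aux

/-- For every `h > 1`, `T(2↑↑h, 3) ≤ T(2↑↑h + 1, 3) ≤ h + 1`. -/
theorem stmt_9 (h : ℕ) (hh : 1 < h) :
    T (tpow h) 3 ≤ T (tpow h + 1) 3 ∧ T (tpow h + 1) 3 ≤ h + 1 := by
  obtain ⟨B, hB⟩ := Stmt9Aux.exists_good h hh
  have mem2 : (h + 1) ∈ {t | ∃ B, IsOneSided (tpow h + 1) 3 t B} := ⟨B, hB⟩
  constructor
  · have hne : {t | ∃ B, IsOneSided (tpow h + 1) 3 t B}.Nonempty := ⟨h + 1, mem2⟩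
    obtain ⟨B0, hB0⟩ := Nat.sInf_mem hne
    show sInf {t | ∃ B, IsOneSided (tpow h) 3 t B} ≤ T (tpow h + 1) 3
    apply Nat.sInf_le
    refine ⟨fun xs => B0 (fun i => Fin.castLE (by omega) (xs i)), ?_⟩
    intro x hx
    exact hB0 (fun i => Fin.castLE (by omega) (x i))
      (fun i he => hx i (Fin.castLE_injective _ he))
  · exact Nat.sInf_le mem2
end

section
/- Let n ≥ 2, c ≥ 2 and t ≥ 1, and suppose there exists a one-sided colour reduction algorithm from n colours to c colours running in t rounds. Then there exists a one-sided colour reduction algorithm from n colours to 2^c − 2 colours running in t − 1 rounds. Consequently, if T(n,c) ≥ 1 then T(n, 2^c − 2) ≤ T(n,c) − 1. -/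
section Aux
variable {n : ℕ} {α : Type*}

lemma snoc_valid {m : ℕ} (x : Fin (m+1) → Fin n)
    (hx : ∀ i : Fin m, x i.castSucc ≠ x i.succ) (y : Fin n) (hy : x (Fin.last m) ≠ y) :
    ∀ i : Fin (m+1), (Fin.snoc x y : Fin (m+2) → Fin n) i.castSucc ≠ (Fin.snoc x y : Fin (m+2) → Fin n) i.succ := by
  intro i
  refine Fin.lastCases ?_ ?_ i
  · rw [Fin.succ_last]
    simpa [Fin.snoc_castSucc, Fin.snoc_last] using hy
  · intro j
    rw [Fin.succ_castSucc]
    simpa [Fin.snoc_castSucc, -Fin.castSucc_succ] using hx j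

lemma cons_valid {m : ℕ} (x : Fin (m+1) → Fin n)
    (hx : ∀ i : Fin m, x i.castSucc ≠ x i.succ) (y : Fin n) (hy : y ≠ x 0) :
    ∀ i : Fin (m+1), (Fin.cons y x : Fin (m+2) → Fin n) i.castSucc ≠ (Fin.cons y x : Fin (m+2) → Fin n) i.succ := by
  intro i
  refine Fin.cases ?_ ?_ i
  · simpa [Fin.castSucc_zero, Fin.cons_zero, Fin.cons_succ] using hy
  · intro j
    rw [← Fin.succ_castSucc, Fin.cons_succ, Fin.cons_succ]
    exact hx j

lemma init_snoc' {m : ℕ} (x : Fin m → α) (y : α) :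
    (fun i : Fin m => (Fin.snoc x y : Fin (m+1) → α) i.castSucc) = x := by
  funext i; simp [Fin.snoc_castSucc]

lemma tail_snoc' {m : ℕ} (x : Fin (m+1) → α) (y : α) :
    (fun i : Fin (m+1) => (Fin.snoc x y : Fin (m+2) → α) i.succ)
      = Fin.snoc (fun i : Fin m => x i.succ) y := by
  funext i
  refine Fin.lastCases ?_ ?_ i
  · rw [Fin.succ_last]; simp [Fin.snoc_last]
  · intro j
    rw [Fin.succ_castSucc]
    simp [Fin.snoc_castSucc, -Fin.castSucc_succ]

lemma tail_cons' {m : ℕ} (x : Fin (m+1) → α) (y : α) :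
    (fun i : Fin (m+1) => (Fin.cons y x : Fin (m+2) → α) i.succ) = x := by
  funext i; simp [Fin.cons_succ]

lemma init_cons' {m : ℕ} (x : Fin (m+1) → α) (y : α) :
    (fun i : Fin (m+1) => (Fin.cons y x : Fin (m+2) → α) i.castSucc)
      = Fin.cons y (fun i : Fin m => x i.castSucc) := by
  funext i
  refine Fin.cases ?_ ?_ i
  · simp
  · intro j
    rw [← Fin.succ_castSucc]
    simp [Fin.cons_succ]

lemma snoc_self' {m : ℕ} (x : Fin (m+1) → α) :
    Fin.snoc (fun i : Fin m => x i.castSucc) (x (Fin.last m)) = x := by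
  funext i
  refine Fin.lastCases ?_ ?_ i
  · simp [Fin.snoc_last]
  · intro j; simp [Fin.snoc_castSucc]

end Aux

section Main

variable {n c t : ℕ}

/-- The set of colours reachable by extending window `w` by one step. -/
noncomputable def Sset (B : (Fin (t + 1 + 1) → Fin n) → Fin c) (w : Fin (t+1) → Fin n) :
    Finset (Fin c) := by
  classical
  exact Finset.univ.filter fun v => ∃ y : Fin n, w (Fin.last t) ≠ y ∧ B (Fin.snoc w y) = v

lemma Sset_nonempty (hn : 2 ≤ n) (B : (Fin (t + 1 + 1) → Fin n) → Fin c)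
    (w : Fin (t+1) → Fin n) : (Sset B w).Nonempty := by
  classical
  have : Nontrivial (Fin n) := Fin.nontrivial_iff_two_le.mpr hn
  obtain ⟨y, hy⟩ := exists_ne (w (Fin.last t))
  refine ⟨B (Fin.snoc w y), ?_⟩
  simp only [Sset, Finset.mem_filter, Finset.mem_univ, true_and]
  exact ⟨y, hy.symm, rfl⟩

lemma Sset_ne_univ (hn : 2 ≤ n) (B : (Fin (t + 1 + 1) → Fin n) → Fin c)
    (hB : IsOneSided n c (t+1) B) (w : Fin (t+1) → Fin n)
    (hw : ∀ i : Fin t, w i.castSucc ≠ w i.succ) : Sset B w ≠ Finset.univ := by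
  classical
  have : Nontrivial (Fin n) := Fin.nontrivial_iff_two_le.mpr hn
  obtain ⟨x0, hx0⟩ := exists_ne (w 0)
  intro hfull
  have hv : B (Fin.cons x0 w) ∈ Sset B w := hfull ▸ Finset.mem_univ _
  simp only [Sset, Finset.mem_filter, Finset.mem_univ, true_and] at hv
  obtain ⟨y, hy, hBy⟩ := hv
  have hu : ∀ i : Fin (t+1), (Fin.snoc w y : Fin (t+2) → Fin n) i.castSucc
      ≠ (Fin.snoc w y : Fin (t+2) → Fin n) i.succ := snoc_valid w hw y hy
  have h0 : (Fin.snoc w y : Fin (t+2) → Fin n) 0 = w 0 := by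
    rw [← Fin.castSucc_zero, Fin.snoc_castSucc]
  have hne := hB (Fin.cons x0 (Fin.snoc w y)) (cons_valid _ hu x0 (by rw [h0]; exact hx0))
  rw [init_cons', tail_cons', init_snoc'] at hne
  exact hne hBy.symm

lemma Sset_adj (B : (Fin (t + 1 + 1) → Fin n) → Fin c) (hB : IsOneSided n c (t+1) B)
    (x : Fin (t+2) → Fin n) (hx : ∀ i : Fin (t+1), x i.castSucc ≠ x i.succ) :
    Sset B (fun i => x i.castSucc) ≠ Sset B (fun i => x i.succ) := by
  classical
  intro he
  have hmem : B x ∈ Sset B (fun i => x i.castSucc) := by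
    simp only [Sset, Finset.mem_filter, Finset.mem_univ, true_and]
    refine ⟨x (Fin.last (t+1)), ?_, ?_⟩
    · have := hx (Fin.last t)
      rwa [Fin.succ_last] at this
    · rw [snoc_self']
  rw [he] at hmem
  simp only [Sset, Finset.mem_filter, Finset.mem_univ, true_and] at hmem
  obtain ⟨y, hy, hBy⟩ := hmem
  have hylast : x (Fin.last (t+1)) ≠ y := by
    rwa [Fin.succ_last] at hy
  have hne := hB (Fin.snoc x y) (snoc_valid x hx y hylast)
  rw [init_snoc', tail_snoc'] at hne
  exact hne hBy.symm

lemma card_aux (c : ℕ) (hc : 2 ≤ c) :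
    Fintype.card {s : Finset (Fin c) // s ≠ ∅ ∧ s ≠ Finset.univ} = 2 ^ c - 2 := by
  classical
  haveI : NeZero c := ⟨by omega⟩
  have h1 : (Finset.univ : Finset (Fin c)) ≠ ∅ := by
    simp [← Finset.nonempty_iff_ne_empty, Finset.univ_nonempty]
  rw [Fintype.card_subtype]
  have h2 : (Finset.univ.filter fun s : Finset (Fin c) => s ≠ ∅ ∧ s ≠ Finset.univ)
      = (Finset.univ \ {∅, Finset.univ}) := by
    ext s
    simp only [Finset.mem_filter, Finset.mem_univ, true_and, Finset.mem_sdiff,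
      Finset.mem_insert, Finset.mem_singleton]
    tauto
  rw [h2, Finset.card_sdiff_of_subset (fun s _ => Finset.mem_univ s)]
  rw [Finset.card_univ, Fintype.card_finset, Fintype.card_fin]
  congr 1
  rw [Finset.card_insert_of_notMem (by simpa using h1.symm), Finset.card_singleton]

lemma speedup (hn : 2 ≤ n) (hc : 2 ≤ c) (B : (Fin (t + 1 + 1) → Fin n) → Fin c)
    (hB : IsOneSided n c (t+1) B) : ∃ B', IsOneSided n (2 ^ c - 2) t B' := by
  classical
  haveI : NeZero c := ⟨by omega⟩
  let e := Fintype.equivFinOfCardEq (card_aux c hc)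
  have hd1 : ({0} : Finset (Fin c)) ≠ ∅ := by simp
  have hd2 : ({0} : Finset (Fin c)) ≠ Finset.univ := by
    intro h
    apply_fun Finset.card at h
    rw [Finset.card_singleton, Finset.card_univ, Fintype.card_fin] at h
    omega
  refine ⟨fun w => e (if h : ∀ i : Fin t, w i.castSucc ≠ w i.succ then
      ⟨Sset B w, Finset.nonempty_iff_ne_empty.mp (Sset_nonempty hn B w),
        Sset_ne_univ hn B hB w h⟩ else ⟨{0}, hd1, hd2⟩), ?_⟩
  intro x hx
  have h1 : ∀ i : Fin t, (fun i : Fin (t+1) => x i.castSucc) i.castSucc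
      ≠ (fun i : Fin (t+1) => x i.castSucc) i.succ := by
    intro i
    have := hx i.castSucc
    simpa [Fin.succ_castSucc, -Fin.castSucc_succ] using this
  have h2 : ∀ i : Fin t, (fun i : Fin (t+1) => x i.succ) i.castSucc
      ≠ (fun i : Fin (t+1) => x i.succ) i.succ := by
    intro i
    have := hx i.succ
    simpa [← Fin.succ_castSucc] using this
  simp only [dif_pos h1, dif_pos h2]
  intro heq
  exact Sset_adj B hB x hx (congrArg Subtype.val (e.injective heq))

end Main


/-- Speed-up lemma: for `n ≥ 2`, `c ≥ 2`, if there is a one-sided algorithm from `n`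
to `c` colours in `t ≥ 1` rounds, then there is one from `n` to `2^c − 2` colours in
`t − 1` rounds. Consequently, if `T(n,c) ≥ 1` then `T(n, 2^c − 2) ≤ T(n,c) − 1`. -/
theorem stmt_10 (n c : ℕ) (hn : 2 ≤ n) (hc : 2 ≤ c) :
    (∀ t : ℕ, 1 ≤ t → (∃ B, IsOneSided n c t B) →
      ∃ B', IsOneSided n (2 ^ c - 2) (t - 1) B') ∧
    (1 ≤ T n c → T n (2 ^ c - 2) ≤ T n c - 1) := by
  have part1 : ∀ t : ℕ, 1 ≤ t → (∃ B, IsOneSided n c t B) →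
      ∃ B', IsOneSided n (2 ^ c - 2) (t - 1) B' := by
    intro t ht hB
    obtain ⟨B, hB⟩ := hB
    match t, ht with
    | (s+1), _ => exact speedup hn hc B hB
  refine ⟨part1, ?_⟩
  intro hT
  have hne : {t | ∃ B, IsOneSided n c t B}.Nonempty := by
    by_contra h
    rw [Set.not_nonempty_iff_eq_empty] at h
    have : T n c = 0 := by rw [T, h, Nat.sInf_empty]
    omega
  have hmem : T n c ∈ {t | ∃ B, IsOneSided n c t B} := Nat.sInf_mem hne
  obtain ⟨B', hB'⟩ := part1 (T n c) hT hmem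
  exact Nat.sInf_le ⟨B', hB'⟩
end

section
/- There is no function B : [4]^2 → [3] such that B(u,v) ≠ B(v,w) whenever u ≠ v and v ≠ w; hence T(4,3) ≥ 2. -/
def tab13 : Fin 4 → Fin 4 → Fin 4 → Fin 3 :=
  ![![![0, 0, 0, 0], ![0, 0, 0, 0], ![0, 1, 0, 0], ![0, 1, 1, 0]],
   ![![0, 1, 2, 2], ![0, 0, 0, 0], ![1, 1, 0, 2], ![1, 1, 1, 0]],
   ![![0, 2, 2, 2], ![0, 0, 0, 0], ![0, 0, 0, 0], ![1, 1, 1, 0]],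
   ![![0, 2, 2, 2], ![0, 0, 0, 0], ![0, 2, 0, 0], ![0, 0, 0, 0]]]
set_option maxRecDepth 8000 in
lemma tab13_key : ∀ a b c d : Fin 4, a ≠ b → b ≠ c → c ≠ d →
    tab13 a b c ≠ tab13 b c d := by decide
lemma tab13_good : IsOneSided 4 3 2 (fun x => tab13 (x 0) (x 1) (x 2)) := by
  intro x h
  show tab13 (x 0) (x 1) (x 2) ≠ tab13 (x 1) (x 2) (x 3)
  exact tab13_key _ _ _ _ (h 0) (h 1) (h 2)

lemma no_antichain :
    ¬ ∃ f : Fin 4 → Finset (Fin 3), ∀ u v, u ≠ v → ∃ a, a ∈ f u ∧ a ∉ f v := by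
  rintro ⟨f, hf⟩
  have hinj : Function.Injective f := by
    intro u v h
    by_contra hne
    obtain ⟨a, ha, hna⟩ := hf u v hne
    rw [h] at ha
    exact hna ha
  have hanti : IsAntichain (· ⊆ ·)
      ((Finset.univ.image f : Finset (Finset (Fin 3))) : Set (Finset (Fin 3))) := by
    intro s hs t ht hst hsub
    simp only [Finset.coe_image, Set.mem_image] at hs ht
    obtain ⟨u, _, rfl⟩ := hs
    obtain ⟨v, _, rfl⟩ := ht
    have huv : u ≠ v := fun h => hst (by rw [h])
    obtain ⟨a, ha, hna⟩ := hf u v huv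
    exact hna (hsub ha)
  have := IsAntichain.sperner hanti
  rw [Finset.card_image_of_injective _ hinj] at this
  simp at this

lemma no_B : ¬ ∃ B : Fin 4 → Fin 4 → Fin 3,
    ∀ u v w, u ≠ v → v ≠ w → B u v ≠ B v w := by
  rintro ⟨B, hB⟩
  apply no_antichain
  refine ⟨fun v => Finset.univ.filter (fun a => ∃ w, w ≠ v ∧ B v w = a), ?_⟩
  intro u v huv
  refine ⟨B u v, ?_, ?_⟩
  · simp only [Finset.mem_filter, Finset.mem_univ, true_and]
    exact ⟨v, huv.symm, rfl⟩
  · simp only [Finset.mem_filter, Finset.mem_univ, true_and]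
    rintro ⟨w, hwv, hw⟩
    exact hB u v w huv (Ne.symm hwv) hw.symm

lemma key13 : ∀ t, (∃ B, IsOneSided 4 3 t B) → 2 ≤ t := by
  rintro t ⟨B, hB⟩
  match t, B, hB with
  | 0, B, hB =>
    exfalso
    have hinj : Function.Injective (fun u : Fin 4 => B (fun _ => u)) := by
      intro u v h
      by_contra hne
      have := hB ![u, v] (by intro i; fin_cases i <;> simpa)
      apply this
      convert h using 2 <;> funext i <;> fin_cases i <;> rfl
    have := Fintype.card_le_of_injective _ hinj
    simp at this
  | 1, B, hB =>
    exfalso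
    apply no_B
    refine ⟨fun u v => B ![u, v], ?_⟩
    intro u v w huv hvw
    have := hB ![u, v, w] (by intro i; fin_cases i <;> simpa)
    convert this using 2 <;> funext i <;> fin_cases i <;> rfl
  | (k+2), B, hB => omega

/-- There is no function `B : [4]² → [3]` with `B(u,v) ≠ B(v,w)` whenever `u ≠ v`
and `v ≠ w`; hence `T(4,3) ≥ 2`. -/
theorem stmt_13 :
    (¬ ∃ B : Fin 4 → Fin 4 → Fin 3,
      ∀ u v w, u ≠ v → v ≠ w → B u v ≠ B v w) ∧
    2 ≤ T 4 3 := by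
  refine ⟨no_B, ?_⟩
  have hne : {t | ∃ B, IsOneSided 4 3 t B}.Nonempty :=
    ⟨2, fun x => tab13 (x 0) (x 1) (x 2), tab13_good⟩
  exact key13 _ (Nat.sInf_mem hne)
end

section
/- There is no function A : [7]^3 → [3] such that for all x_0, x_1, x_2, x_3 ∈ [7] with x_0 ≠ x_1, x_1 ≠ x_2 and x_2 ≠ x_3, one has A(x_0,x_1,x_2) ≠ A(x_1,x_2,x_3). Equivalently, the neighbourhood graph N_{7,1} is not 3-colourable, so C(7,3) > 1. -/
/-! ### Auxiliary material for `stmt_14` -/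

/-- A chain-index function on families of subsets of `Fin 3`: on "good" (downward
closed, containing `∅`, not containing `univ`) families, equal indices force
comparability under `⊆`. -/
def stmtPhi (G : Finset (Finset (Fin 3))) : Fin 4 :=
  if ({1,2} : Finset (Fin 3)) ∈ G ∧ ({0,1} : Finset (Fin 3)) ∉ G ∧ ({0,2} : Finset (Fin 3)) ∉ G then 3
  else if (({1} : Finset (Fin 3)) ∉ G ∧ ({2} : Finset (Fin 3)) ∈ G) ∨
      (({0,2} : Finset (Fin 3)) ∈ G ∧ ({1,2} : Finset (Fin 3)) ∈ G ∧ ({0,1} : Finset (Fin 3)) ∉ G) then 2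
  else if (({1} : Finset (Fin 3)) ∉ G) ∨
      (({0,1} : Finset (Fin 3)) ∈ G ∧ ({0,2} : Finset (Fin 3)) ∉ G) ∨
      (({0} : Finset (Fin 3)) ∈ G ∧ ({2} : Finset (Fin 3)) ∉ G) then 0
  else 1

/-- Downward closed families of subsets of `Fin 3` containing `∅` and not `univ`. -/
def StmtGood (G : Finset (Finset (Fin 3))) : Prop :=
  ∅ ∈ G ∧ Finset.univ ∉ G ∧ ∀ s ∈ G, ∀ t, t ⊆ s → t ∈ G

instance : DecidablePred StmtGood := fun G => by unfold StmtGood; infer_instance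

set_option maxRecDepth 10000 in
/-- The fibres of `stmtPhi` over good families are chains: the lattice of good
families has width at most 4 (Dilworth decomposition, verified by `decide`). -/
lemma stmtPhi_chain : ∀ G₁ G₂ : Finset (Finset (Fin 3)),
    StmtGood G₁ → StmtGood G₂ → stmtPhi G₁ = stmtPhi G₂ → G₁ ⊆ G₂ ∨ G₂ ⊆ G₁ := by decide

/-- The first half of `stmt_14`: `N_{7,1}` is not 3-colourable. -/
lemma stmt14_part1 : ¬ ∃ A : Fin 7 → Fin 7 → Fin 7 → Fin 3,
    ∀ x0 x1 x2 x3, x0 ≠ x1 → x1 ≠ x2 → x2 ≠ x3 → A x0 x1 x2 ≠ A x1 x2 x3 := by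
  rintro ⟨A, hA⟩
  set Out : Fin 7 → Fin 7 → Finset (Fin 3) :=
    fun x y => Finset.univ.filter (fun c => ∃ z, z ≠ y ∧ A x y z = c) with hOutDef
  have memOut : ∀ x y z, z ≠ y → A x y z ∈ Out x y :=
    fun x y z hz => Finset.mem_filter.mpr ⟨Finset.mem_univ _, z, hz, rfl⟩
  have k1 : ∀ x y z, x ≠ y → z ≠ y → ¬ Out x y ⊆ Out y z := by
    intro x y z hxy hzy hsub
    obtain ⟨-, w, hwz, hw⟩ := Finset.mem_filter.mp (hsub (memOut x y z hzy))
    exact hA x y z w hxy (Ne.symm hzy) (Ne.symm hwz) hw.symm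
  set g : Fin 7 → Finset (Finset (Fin 3)) :=
    fun y => Finset.univ.filter (fun s => ∃ z, z ≠ y ∧ s ⊆ Out y z) with hgDef
  have hne : ∀ y : Fin 7, ∃ z : Fin 7, z ≠ y := by
    intro y
    by_cases h : y = 0
    · exact ⟨1, by simp [h]⟩
    · exact ⟨0, fun h0 => h h0.symm⟩
  have good : ∀ y, StmtGood (g y) := by
    intro y
    refine ⟨?_, ?_, ?_⟩
    · obtain ⟨z, hz⟩ := hne y
      exact Finset.mem_filter.mpr ⟨Finset.mem_univ _, z, hz, Finset.empty_subset _⟩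
    · intro hu
      obtain ⟨-, z, hz, hsub⟩ := Finset.mem_filter.mp hu
      obtain ⟨x, hx⟩ := hne y
      exact k1 x y z hx hz ((Finset.subset_univ _).trans hsub)
    · intro s hs t hts
      obtain ⟨-, z, hz, hsub⟩ := Finset.mem_filter.mp hs
      exact Finset.mem_filter.mpr ⟨Finset.mem_univ _, z, hz, hts.trans hsub⟩
  have k3 : ∀ x y : Fin 7, x ≠ y → ¬ g x ⊆ g y := by
    intro x y hxy hsub
    have h1 : Out x y ∈ g x :=
      Finset.mem_filter.mpr ⟨Finset.mem_univ _, y, Ne.symm hxy, Finset.Subset.refl _⟩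
    obtain ⟨-, z, hz, hsub2⟩ := Finset.mem_filter.mp (hsub h1)
    exact k1 x y z hxy hz hsub2
  obtain ⟨a, b, hab, heq⟩ :=
    Fintype.exists_ne_map_eq_of_card_lt (fun a : Fin 7 => stmtPhi (g a)) (by simp)
  rcases stmtPhi_chain (g a) (g b) (good a) (good b) heq with h | h
  · exact k3 a b hab h
  · exact k3 b a hab.symm h

/-! One-round colour reductions `7 → 6 → 5 → 4 → 3` used to show that some
two-sided algorithm exists at all (so the `sInf` defining `C 7 3` is over a
nonempty set). Each step keeps the middle colour unless it is the top colour,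
in which case it picks a colour in `{0,1,2}` avoiding both neighbours. -/

def stmtS7 (x y z : Fin 7) : Fin 6 :=
  if h : (y : ℕ) < 6 then ⟨y, h⟩
  else if (x : ℕ) ≠ 0 ∧ (z : ℕ) ≠ 0 then ⟨0, by norm_num⟩
  else if (x : ℕ) ≠ 1 ∧ (z : ℕ) ≠ 1 then ⟨1, by norm_num⟩
  else ⟨2, by norm_num⟩

def stmtS6 (x y z : Fin 6) : Fin 5 :=
  if h : (y : ℕ) < 5 then ⟨y, h⟩
  else if (x : ℕ) ≠ 0 ∧ (z : ℕ) ≠ 0 then ⟨0, by norm_num⟩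
  else if (x : ℕ) ≠ 1 ∧ (z : ℕ) ≠ 1 then ⟨1, by norm_num⟩
  else ⟨2, by norm_num⟩

def stmtS5 (x y z : Fin 5) : Fin 4 :=
  if h : (y : ℕ) < 4 then ⟨y, h⟩
  else if (x : ℕ) ≠ 0 ∧ (z : ℕ) ≠ 0 then ⟨0, by norm_num⟩
  else if (x : ℕ) ≠ 1 ∧ (z : ℕ) ≠ 1 then ⟨1, by norm_num⟩
  else ⟨2, by norm_num⟩

def stmtS4 (x y z : Fin 4) : Fin 3 :=
  if h : (y : ℕ) < 3 then ⟨y, h⟩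
  else if (x : ℕ) ≠ 0 ∧ (z : ℕ) ≠ 0 then ⟨0, by norm_num⟩
  else if (x : ℕ) ≠ 1 ∧ (z : ℕ) ≠ 1 then ⟨1, by norm_num⟩
  else ⟨2, by norm_num⟩

lemma stmtP7 : ∀ x y z w : Fin 7, x ≠ y → y ≠ z → z ≠ w → stmtS7 x y z ≠ stmtS7 y z w := by decide
lemma stmtP6 : ∀ x y z w : Fin 6, x ≠ y → y ≠ z → z ≠ w → stmtS6 x y z ≠ stmtS6 y z w := by decide
lemma stmtP5 : ∀ x y z w : Fin 5, x ≠ y → y ≠ z → z ≠ w → stmtS5 x y z ≠ stmtS5 y z w := by decide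
lemma stmtP4 : ∀ x y z w : Fin 4, x ≠ y → y ≠ z → z ≠ w → stmtS4 x y z ≠ stmtS4 y z w := by decide

def stmtZF (c0 c1 c2 c3 c4 : Fin 7) : Fin 5 :=
  stmtS6 (stmtS7 c0 c1 c2) (stmtS7 c1 c2 c3) (stmtS7 c2 c3 c4)

def stmtWF (b0 b1 b2 b3 b4 b5 b6 : Fin 7) : Fin 4 :=
  stmtS5 (stmtZF b0 b1 b2 b3 b4) (stmtZF b1 b2 b3 b4 b5) (stmtZF b2 b3 b4 b5 b6)

def stmtF9 (a0 a1 a2 a3 a4 a5 a6 a7 a8 : Fin 7) : Fin 3 :=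
  stmtS4 (stmtWF a0 a1 a2 a3 a4 a5 a6) (stmtWF a1 a2 a3 a4 a5 a6 a7)
    (stmtWF a2 a3 a4 a5 a6 a7 a8)

lemma stmtKeyF (a0 a1 a2 a3 a4 a5 a6 a7 a8 a9 : Fin 7)
    (h0 : a0 ≠ a1) (h1 : a1 ≠ a2) (h2 : a2 ≠ a3) (h3 : a3 ≠ a4) (h4 : a4 ≠ a5)
    (h5 : a5 ≠ a6) (h6 : a6 ≠ a7) (h7 : a7 ≠ a8) (h8 : a8 ≠ a9) :
    stmtF9 a0 a1 a2 a3 a4 a5 a6 a7 a8 ≠ stmtF9 a1 a2 a3 a4 a5 a6 a7 a8 a9 := by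
  have hy0 := stmtP7 a0 a1 a2 a3 h0 h1 h2
  have hy1 := stmtP7 a1 a2 a3 a4 h1 h2 h3
  have hy2 := stmtP7 a2 a3 a4 a5 h2 h3 h4
  have hy3 := stmtP7 a3 a4 a5 a6 h3 h4 h5
  have hy4 := stmtP7 a4 a5 a6 a7 h4 h5 h6
  have hy5 := stmtP7 a5 a6 a7 a8 h5 h6 h7
  have hy6 := stmtP7 a6 a7 a8 a9 h6 h7 h8
  have hz0 : stmtZF a0 a1 a2 a3 a4 ≠ stmtZF a1 a2 a3 a4 a5 := stmtP6 _ _ _ _ hy0 hy1 hy2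
  have hz1 : stmtZF a1 a2 a3 a4 a5 ≠ stmtZF a2 a3 a4 a5 a6 := stmtP6 _ _ _ _ hy1 hy2 hy3
  have hz2 : stmtZF a2 a3 a4 a5 a6 ≠ stmtZF a3 a4 a5 a6 a7 := stmtP6 _ _ _ _ hy2 hy3 hy4
  have hz3 : stmtZF a3 a4 a5 a6 a7 ≠ stmtZF a4 a5 a6 a7 a8 := stmtP6 _ _ _ _ hy3 hy4 hy5
  have hz4 : stmtZF a4 a5 a6 a7 a8 ≠ stmtZF a5 a6 a7 a8 a9 := stmtP6 _ _ _ _ hy4 hy5 hy6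
  have hw0 : stmtWF a0 a1 a2 a3 a4 a5 a6 ≠ stmtWF a1 a2 a3 a4 a5 a6 a7 :=
    stmtP5 _ _ _ _ hz0 hz1 hz2
  have hw1 : stmtWF a1 a2 a3 a4 a5 a6 a7 ≠ stmtWF a2 a3 a4 a5 a6 a7 a8 :=
    stmtP5 _ _ _ _ hz1 hz2 hz3
  have hw2 : stmtWF a2 a3 a4 a5 a6 a7 a8 ≠ stmtWF a3 a4 a5 a6 a7 a8 a9 :=
    stmtP5 _ _ _ _ hz2 hz3 hz4
  exact stmtP4 _ _ _ _ hw0 hw1 hw2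

/-- A two-sided colour reduction from 7 to 3 colours in 4 rounds exists. -/
lemma stmtMem4 : ∃ A, IsTwoSided 7 3 4 A := by
  refine ⟨fun v => stmtF9 (v ⟨0, by omega⟩) (v ⟨1, by omega⟩) (v ⟨2, by omega⟩)
    (v ⟨3, by omega⟩) (v ⟨4, by omega⟩) (v ⟨5, by omega⟩) (v ⟨6, by omega⟩)
    (v ⟨7, by omega⟩) (v ⟨8, by omega⟩), ?_⟩
  intro x hx
  exact stmtKeyF (x ⟨0, by omega⟩) (x ⟨1, by omega⟩) (x ⟨2, by omega⟩) (x ⟨3, by omega⟩)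
    (x ⟨4, by omega⟩) (x ⟨5, by omega⟩) (x ⟨6, by omega⟩) (x ⟨7, by omega⟩)
    (x ⟨8, by omega⟩) (x ⟨9, by omega⟩)
    (hx ⟨0, by omega⟩) (hx ⟨1, by omega⟩) (hx ⟨2, by omega⟩) (hx ⟨3, by omega⟩)
    (hx ⟨4, by omega⟩) (hx ⟨5, by omega⟩) (hx ⟨6, by omega⟩) (hx ⟨7, by omega⟩)
    (hx ⟨8, by omega⟩)

/-- No zero-round two-sided reduction from 7 to 3 colours (pigeonhole). -/
lemma stmtNot0 : ¬ ∃ A : (Fin (2 * 0 + 1) → Fin 7) → Fin 3, IsTwoSided 7 3 0 A := by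
  rintro ⟨A, hA⟩
  have inj : Function.Injective (fun a : Fin 7 => A (fun _ => a)) := by
    intro a b hab
    by_contra hne
    have h := hA (fun j => if (j : ℕ) = 0 then a else b) ?_
    · apply h
      have e1 : (fun i : Fin (2 * 0 + 1) =>
          (fun j : Fin (2 * 0 + 1 + 1) => if (j : ℕ) = 0 then a else b) i.castSucc)
          = fun _ => a := by
        funext i
        have : (i : ℕ) = 0 := by omega
        show (if (i : ℕ) = 0 then a else b) = a
        simp [this]
      have e2 : (fun i : Fin (2 * 0 + 1) =>
          (fun j : Fin (2 * 0 + 1 + 1) => if (j : ℕ) = 0 then a else b) i.succ)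
          = fun _ => b := by
        funext i
        show (if (i : ℕ) + 1 = 0 then a else b) = b
        simp
      rw [e1, e2]
      exact hab
    · intro i
      have : (i : ℕ) = 0 := by omega
      show (if (i : ℕ) = 0 then a else b) ≠ (if (i : ℕ) + 1 = 0 then a else b)
      simp [this]
      exact hne
  have := Fintype.card_le_of_injective _ inj
  simp at this

/-- No one-round two-sided reduction from 7 to 3 colours. -/
lemma stmtNot1 : ¬ ∃ A : (Fin (2 * 1 + 1) → Fin 7) → Fin 3, IsTwoSided 7 3 1 A := by
  rintro ⟨A, hA⟩
  apply stmt14_part1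
  refine ⟨fun x0 x1 x2 => A ![x0, x1, x2], ?_⟩
  intro x0 x1 x2 x3 h01 h12 h23
  have h := hA ![x0, x1, x2, x3] ?_
  · have e1 : (fun i : Fin (2 * 1 + 1) => (![x0, x1, x2, x3] : Fin 4 → Fin 7) i.castSucc)
        = ![x0, x1, x2] := by
      funext i
      fin_cases i <;> rfl
    have e2 : (fun i : Fin (2 * 1 + 1) => (![x0, x1, x2, x3] : Fin 4 → Fin 7) i.succ)
        = ![x1, x2, x3] := by
      funext i
      fin_cases i <;> rfl
    rw [e1, e2] at h
    exact h
  · intro i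
    fin_cases i
    · exact h01
    · exact h12
    · exact h23

/-- There is no function `A : [7]³ → [3]` such that `A(x₀,x₁,x₂) ≠ A(x₁,x₂,x₃)`
whenever consecutive arguments differ: the neighbourhood graph `N_{7,1}` is not
3-colourable, so `C(7,3) > 1`. -/
theorem stmt_14 :
    (¬ ∃ A : Fin 7 → Fin 7 → Fin 7 → Fin 3,
      ∀ x0 x1 x2 x3, x0 ≠ x1 → x1 ≠ x2 → x2 ≠ x3 → A x0 x1 x2 ≠ A x1 x2 x3) ∧
    1 < C 7 3 := by
  refine ⟨stmt14_part1, ?_⟩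
  have hS : {t | ∃ A, IsTwoSided 7 3 t A}.Nonempty := ⟨4, stmtMem4⟩
  have hmem := Nat.sInf_mem hS
  by_contra hle
  push_neg at hle
  have hle' : sInf {t | ∃ A, IsTwoSided 7 3 t A} ≤ 1 := hle
  have : sInf {t | ∃ A, IsTwoSided 7 3 t A} = 0 ∨
      sInf {t | ∃ A, IsTwoSided 7 3 t A} = 1 := by omega
  rcases this with h | h <;> rw [h] at hmem
  · exact stmtNot0 hmem
  · exact stmtNot1 hmem
end

section
/- T(16,3) ≥ 3; that is, there is no function B : [16]^3 → [3] such that for all x_0, x_1, x_2, x_3 ∈ [16] with x_0 ≠ x_1, x_1 ≠ x_2 and x_2 ≠ x_3, one has B(x_0,x_1,x_2) ≠ B(x_1,x_2,x_3). -/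
set_option maxRecDepth 40000
set_option maxHeartbeats 4000000


def c0 : Finset (Finset (Finset (Fin 3))) :=
  {∅,
   {∅},
   {∅, {0}},
   {∅, {0}, {1}},
   {∅, {0}, {1}, {0, 1}},
   {∅, {0}, {1}, {2}, {0, 1}},
   {∅, {0}, {1}, {2}, {0, 1}, {1, 2}}}

def c1 : Finset (Finset (Finset (Fin 3))) :=
  {{∅, {1}},
   {∅, {1}, {2}},
   {∅, {0}, {1}, {2}},
   {∅, {0}, {1}, {2}, {0, 2}},
   {∅, {0}, {1}, {2}, {0, 1}, {0, 2}, {1, 2}, {0, 1, 2}}}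

def c2 : Finset (Finset (Finset (Fin 3))) :=
  {{∅, {2}},
   {∅, {0}, {2}},
   {∅, {0}, {2}, {0, 2}},
   {∅, {0}, {1}, {2}, {0, 1}, {0, 2}},
   {∅, {0}, {1}, {2}, {0, 1}, {0, 2}, {1, 2}}}

def c3 : Finset (Finset (Finset (Fin 3))) :=
  {{∅, {1}, {2}, {1, 2}},
   {∅, {0}, {1}, {2}, {1, 2}},
   {∅, {0}, {1}, {2}, {0, 2}, {1, 2}}}

def DS20 : Finset (Finset (Finset (Fin 3))) :=
  {∅,
   {∅},
   {∅, {0}},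
   {∅, {1}},
   {∅, {2}},
   {∅, {0}, {1}},
   {∅, {0}, {2}},
   {∅, {1}, {2}},
   {∅, {0}, {1}, {2}},
   {∅, {0}, {1}, {0, 1}},
   {∅, {0}, {2}, {0, 2}},
   {∅, {1}, {2}, {1, 2}},
   {∅, {0}, {1}, {2}, {0, 1}},
   {∅, {0}, {1}, {2}, {0, 2}},
   {∅, {0}, {1}, {2}, {1, 2}},
   {∅, {0}, {1}, {2}, {0, 1}, {0, 2}},
   {∅, {0}, {1}, {2}, {0, 1}, {1, 2}},
   {∅, {0}, {1}, {2}, {0, 2}, {1, 2}},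
   {∅, {0}, {1}, {2}, {0, 1}, {0, 2}, {1, 2}},
   {∅, {0}, {1}, {2}, {0, 1}, {0, 2}, {1, 2}, {0, 1, 2}}}

/-! ### Lower bound: no 2-round algorithm -/

def DownB (a : Finset (Finset (Fin 3))) : Prop := ∀ s ∈ a, ∀ t ∈ s.powerset, t ∈ a

instance : DecidablePred DownB := fun a => by unfold DownB; infer_instance

def g (a : Finset (Finset (Fin 3))) : Fin 4 :=
  if a ∈ c0 then 0 else if a ∈ c1 then 1 else if a ∈ c2 then 2 else 3

lemma m1 : ∀ a : Finset (Finset (Fin 3)), DownB a → a ∈ DS20 := by decide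

lemma key' : ∀ a ∈ DS20, ∀ b ∈ DS20, g a = g b → a ⊆ b ∨ b ⊆ a := by decide

def Sf (B : Fin 16 → Fin 16 → Fin 16 → Fin 3) (x y : Fin 16) : Finset (Fin 3) :=
  (Finset.univ.filter (fun z => z ≠ y)).image (fun z => B x y z)

def Df (B : Fin 16 → Fin 16 → Fin 16 → Fin 3) (x : Fin 16) : Finset (Finset (Fin 3)) :=
  Finset.univ.filter (fun s => ∃ y, y ≠ x ∧ s ⊆ Sf B x y)

lemma noB :
    ¬ ∃ B : Fin 16 → Fin 16 → Fin 16 → Fin 3,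
      ∀ x0 x1 x2 x3, x0 ≠ x1 → x1 ≠ x2 → x2 ≠ x3 → B x0 x1 x2 ≠ B x1 x2 x3 := by
  rintro ⟨B, hB⟩
  have hSmem : ∀ x y z : Fin 16, z ≠ y → B x y z ∈ Sf B x y := by
    intro x y z hz
    exact Finset.mem_image.2 ⟨z, Finset.mem_filter.2 ⟨Finset.mem_univ _, hz⟩, rfl⟩
  have hD_in : ∀ x y : Fin 16, x ≠ y → Sf B x y ∈ Df B x := by
    intro x y hxy
    exact Finset.mem_filter.2 ⟨Finset.mem_univ _, y, Ne.symm hxy, Finset.Subset.refl _⟩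
  have hD_not : ∀ x y : Fin 16, x ≠ y → Sf B x y ∉ Df B y := by
    intro x y hxy hmem
    rw [Df, Finset.mem_filter] at hmem
    obtain ⟨-, z, hz, hsub⟩ := hmem
    have h2 := hsub (hSmem x y z hz)
    rw [Sf, Finset.mem_image] at h2
    obtain ⟨w, hw, heq⟩ := h2
    rw [Finset.mem_filter] at hw
    exact hB x y z w hxy (Ne.symm hz) (Ne.symm hw.2) heq.symm
  have hDdown : ∀ x, DownB (Df B x) := by
    intro x s hs t ht
    rw [Finset.mem_powerset] at ht
    rw [Df, Finset.mem_filter] at hs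
    obtain ⟨-, y, hy, hsub⟩ := hs
    exact Finset.mem_filter.2 ⟨Finset.mem_univ _, y, hy, ht.trans hsub⟩
  obtain ⟨a, b, hab, hg⟩ :=
    Fintype.exists_ne_map_eq_of_card_lt (fun x : Fin 16 => g (Df B x)) (by simp)
  rcases key' _ (m1 _ (hDdown a)) _ (m1 _ (hDdown b)) hg with hsub | hsub
  · exact hD_not a b hab (hsub (hD_in a b hab))
  · exact hD_not b a (Ne.symm hab) (hsub (hD_in b a (Ne.symm hab)))

lemma no2 : ¬ ∃ B, IsOneSided 16 3 2 B := by
  rintro ⟨B₂, hB₂⟩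
  apply noB
  refine ⟨fun a b c => B₂ ![a, b, c], ?_⟩
  intro x0 x1 x2 x3 h01 h12 h23
  have hv : ∀ i : Fin 3, (![x0, x1, x2, x3] : Fin 4 → Fin 16) i.castSucc ≠
      (![x0, x1, x2, x3] : Fin 4 → Fin 16) i.succ := by
    intro i
    fin_cases i
    · exact h01
    · exact h12
    · exact h23
  have h := hB₂ ![x0, x1, x2, x3] hv
  have e1 : (fun i : Fin 3 => (![x0, x1, x2, x3] : Fin 4 → Fin 16) i.castSucc) = ![x0, x1, x2] := by
    funext i; fin_cases i <;> rfl
  have e2 : (fun i : Fin 3 => (![x0, x1, x2, x3] : Fin 4 → Fin 16) i.succ) = ![x1, x2, x3] := by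
    funext i; fin_cases i <;> rfl
  rw [e1, e2] at h
  exact h

def r0 : Finset (Finset (Finset (Fin 3))) :=
  {{{0}},
   {{1}},
   {{2}},
   {{0}, {1}},
   {{0}, {2}},
   {{1}, {2}},
   {{0}, {1}, {2}},
   {{0}, {1}, {0, 1}},
   {{0}, {2}, {0, 2}},
   {{1}, {2}, {1, 2}}}

def r1 : Finset (Finset (Finset (Fin 3))) :=
  {{{0}},
   {{1}},
   {{2}},
   {{0}, {1}},
   {{0}, {2}},
   {{1}, {2}},
   {{0}, {1}, {2}},
   {{0}, {1}, {0, 1}},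
   {{0}, {2}, {0, 2}},
   {{0}, {1}, {2}, {0, 1}}}

def r2 : Finset (Finset (Finset (Fin 3))) :=
  {{{0}},
   {{1}},
   {{2}},
   {{0}, {1}},
   {{0}, {2}},
   {{1}, {2}},
   {{0}, {1}, {2}},
   {{0}, {1}, {0, 1}},
   {{1}, {2}, {1, 2}},
   {{0}, {1}, {2}, {0, 1}}}

def r3 : Finset (Finset (Finset (Fin 3))) :=
  {{{0}},
   {{1}},
   {{2}},
   {{0}, {1}},
   {{0}, {2}},
   {{1}, {2}},
   {{0}, {1}, {2}},
   {{0}, {1}, {0, 1}},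
   {{0}, {2}, {0, 2}},
   {{0}, {1}, {2}, {0, 2}}}

def r4 : Finset (Finset (Finset (Fin 3))) :=
  {{{0}},
   {{1}},
   {{2}},
   {{0}, {1}},
   {{0}, {2}},
   {{1}, {2}},
   {{0}, {1}, {2}},
   {{0}, {2}, {0, 2}},
   {{1}, {2}, {1, 2}},
   {{0}, {1}, {2}, {0, 2}}}

def r5 : Finset (Finset (Finset (Fin 3))) :=
  {{{0}},
   {{1}},
   {{2}},
   {{0}, {1}},
   {{0}, {2}},
   {{1}, {2}},
   {{0}, {1}, {2}},
   {{0}, {1}, {0, 1}},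
   {{1}, {2}, {1, 2}},
   {{0}, {1}, {2}, {1, 2}}}

def r6 : Finset (Finset (Finset (Fin 3))) :=
  {{{0}},
   {{1}},
   {{2}},
   {{0}, {1}},
   {{0}, {2}},
   {{1}, {2}},
   {{0}, {1}, {2}},
   {{0}, {2}, {0, 2}},
   {{1}, {2}, {1, 2}},
   {{0}, {1}, {2}, {1, 2}}}

/-! ### Existence: a 4-round algorithm -/

def rr : Fin 7 → Finset (Finset (Finset (Fin 3))) := ![r0, r1, r2, r3, r4, r5, r6]

def I : Fin 16 → Finset (Fin 7) :=
  ![{0,1,2}, {0,1,3}, {0,1,4}, {0,1,5}, {0,1,6}, {0,2,3}, {0,2,4}, {0,2,5},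
    {0,2,6}, {0,3,4}, {0,3,5}, {0,3,6}, {0,4,5}, {0,4,6}, {0,5,6}, {1,2,3}]

lemma hA0 : ∀ x y : Fin 16, x ≠ y → ∃ i, i ∈ I x ∧ i ∉ I y := by decide

lemma hrrinj : ∀ i j : Fin 7, rr i = rr j → i = j := by decide

lemma hanti' : ∀ i j : Fin 7, rr i ⊆ rr j → rr i = rr j := by decide

lemma hclB'' : ∀ i j : Fin 7, ∀ s ∈ rr i, ∀ t ∈ rr j, s ⊆ t → s ∈ rr j := by decide

lemma hclC'' : ∀ i j : Fin 7, ∀ s ∈ rr i, ∀ t ∈ rr j, ∀ u ∈ s, ∀ v ∈ t, u ⊆ v → u ∈ t := by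
  decide

def pick (s : Finset (Fin 3)) : Fin 3 := if h : s.Nonempty then s.min' h else 0

lemma pick_mem (s : Finset (Fin 3)) (h : s.Nonempty) : pick s ∈ s := by
  unfold pick
  rw [dif_pos h]
  exact s.min'_mem h

lemma ex4 : ∃ B, IsOneSided 16 3 4 B := by
  classical
  have h3 : ∀ x y : Fin 16, ∃ i : Fin 7, x ≠ y → i ∈ I x ∧ i ∉ I y := by
    intro x y
    by_cases h : x = y
    · exact ⟨0, fun hc => absurd h hc⟩
    · obtain ⟨i, hi1, hi2⟩ := hA0 x y h
      exact ⟨i, fun _ => ⟨hi1, hi2⟩⟩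
  choose i3 hi3 using h3
  have hne2 : ∀ x y z : Fin 16, x ≠ y → y ≠ z → (rr (i3 x y) \ rr (i3 y z)).Nonempty := by
    intro x y z hxy hyz
    rw [Finset.sdiff_nonempty]
    intro hsub
    have hij : i3 x y = i3 y z := hrrinj _ _ (hanti' _ _ hsub)
    exact (hi3 x y hxy).2 (hij ▸ (hi3 y z hyz).1)
  have h2 : ∀ x y z : Fin 16, ∃ s : Finset (Finset (Fin 3)),
      x ≠ y → y ≠ z → s ∈ rr (i3 x y) ∧ s ∉ rr (i3 y z) := by
    intro x y z
    by_cases hxy : x ≠ y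
    · by_cases hyz : y ≠ z
      · obtain ⟨s, hs⟩ := hne2 x y z hxy hyz
        rw [Finset.mem_sdiff] at hs
        exact ⟨s, fun _ _ => hs⟩
      · exact ⟨∅, fun _ h => absurd h hyz⟩
    · exact ⟨∅, fun h => absurd h hxy⟩
  choose τ2 hτ2 using h2
  have hne1 : ∀ x y z w : Fin 16, x ≠ y → y ≠ z → z ≠ w →
      (τ2 x y z \ τ2 y z w).Nonempty := by
    intro x y z w hxy hyz hzw
    rw [Finset.sdiff_nonempty]
    intro hsub
    exact (hτ2 x y z hxy hyz).2 (hclB'' (i3 x y) (i3 y z) _ (hτ2 x y z hxy hyz).1 _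
      (hτ2 y z w hyz hzw).1 hsub)
  have h1 : ∀ x y z w : Fin 16, ∃ u : Finset (Fin 3),
      x ≠ y → y ≠ z → z ≠ w → u ∈ τ2 x y z ∧ u ∉ τ2 y z w := by
    intro x y z w
    by_cases hxy : x ≠ y
    · by_cases hyz : y ≠ z
      · by_cases hzw : z ≠ w
        · obtain ⟨u, hu⟩ := hne1 x y z w hxy hyz hzw
          rw [Finset.mem_sdiff] at hu
          exact ⟨u, fun _ _ _ => hu⟩
        · exact ⟨∅, fun _ _ h => absurd h hzw⟩
      · exact ⟨∅, fun _ h => absurd h hyz⟩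
    · exact ⟨∅, fun h => absurd h hxy⟩
  choose τ1 hτ1 using h1
  have hkey : ∀ a b c d e : Fin 16, a ≠ b → b ≠ c → c ≠ d → d ≠ e →
      (τ1 a b c d \ τ1 b c d e).Nonempty := by
    intro a b c d e hab hbc hcd hde
    rw [Finset.sdiff_nonempty]
    intro hsub
    exact (hτ1 a b c d hab hbc hcd).2 (hclC'' (i3 a b) (i3 b c) _ (hτ2 a b c hab hbc).1 _
      (hτ2 b c d hbc hcd).1 _ (hτ1 a b c d hab hbc hcd).1 _ (hτ1 b c d e hbc hcd hde).1 hsub)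
  refine ⟨fun p => pick (τ1 (p 0) (p 1) (p 2) (p 3) \ τ1 (p 1) (p 2) (p 3) (p 4)), ?_⟩
  intro x hx
  have d01 : x 0 ≠ x 1 := hx 0
  have d12 : x 1 ≠ x 2 := hx 1
  have d23 : x 2 ≠ x 3 := hx 2
  have d34 : x 3 ≠ x 4 := hx 3
  have d45 : x 4 ≠ x 5 := hx 4
  have m0 := pick_mem _ (hkey (x 0) (x 1) (x 2) (x 3) (x 4) d01 d12 d23 d34)
  have m1' := pick_mem _ (hkey (x 1) (x 2) (x 3) (x 4) (x 5) d12 d23 d34 d45)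
  rw [Finset.mem_sdiff] at m0 m1'
  intro hEq
  have hEq' : pick (τ1 (x 0) (x 1) (x 2) (x 3) \ τ1 (x 1) (x 2) (x 3) (x 4)) =
      pick (τ1 (x 1) (x 2) (x 3) (x 4) \ τ1 (x 2) (x 3) (x 4) (x 5)) := hEq
  exact m0.2 (by rw [hEq']; exact m1'.1)

/-! ### Monotonicity and conclusion -/

lemma mono {n c t : ℕ} (B : (Fin (t + 1) → Fin n) → Fin c) (hB : IsOneSided n c t B) :
    IsOneSided n c (t + 1) (fun v => B (fun i => v i.succ)) := by
  intro x hx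
  have h := hB (fun j => x j.succ)
    (fun i => by simpa only [← Fin.succ_castSucc] using hx i.succ)
  simpa only [Fin.succ_castSucc] using h

lemma upward : ∀ s t : ℕ, s ≤ t → (∃ B, IsOneSided 16 3 s B) → ∃ B, IsOneSided 16 3 t B := by
  intro s t hst hB
  induction hst with
  | refl => exact hB
  | step h ih => obtain ⟨B, hB'⟩ := ih; exact ⟨_, mono B hB'⟩

/-- `T(16,3) ≥ 3`: there is no function `B : [16]³ → [3]` such that
`B(x₀,x₁,x₂) ≠ B(x₁,x₂,x₃)` whenever consecutive arguments differ. -/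
theorem stmt_15 :
    3 ≤ T 16 3 ∧
    ¬ ∃ B : Fin 16 → Fin 16 → Fin 16 → Fin 3,
      ∀ x0 x1 x2 x3, x0 ≠ x1 → x1 ≠ x2 → x2 ≠ x3 → B x0 x1 x2 ≠ B x1 x2 x3 := by
  constructor
  · rw [T]
    by_contra h
    push_neg at h
    have hmem := Nat.sInf_mem (⟨4, ex4⟩ : {t | ∃ B, IsOneSided 16 3 t B}.Nonempty)
    have h2 : ∃ B, IsOneSided 16 3 2 B :=
      upward _ 2 (by omega) hmem
    exact no2 h2
  · exact noB
end

section
/- For every integer n ≥ 16 and every integer t ≥ 2, if there exists a one-sided colour reduction algorithm from n colours to 3 colours running in t rounds, then there exists a one-sided colour reduction algorithm from n colours to 16 colours running in t − 2 rounds. Consequently T(n,16) ≤ T(n,3) − 2 for all n ≥ 16. -/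
set_option maxRecDepth 10000

namespace CRaux

variable {n s : ℕ}

def ext2 (w : Fin (s+2) → Fin n) (y : Fin n) : Fin (s+3) → Fin n :=
  fun i => if h : (i : ℕ) < s+2 then w ⟨i, h⟩ else y

def ext1 (v : Fin (s+1) → Fin n) (y : Fin n) : Fin (s+2) → Fin n :=
  fun i => if h : (i : ℕ) < s+1 then v ⟨i, h⟩ else y

variable (B : (Fin (s+3) → Fin n) → Fin 3)

def Img (w : Fin (s+2) → Fin n) : Finset (Fin 3) :=
  Finset.univ.filter (fun b => ∃ y : Fin n, y ≠ w ⟨s+1, by omega⟩ ∧ B (ext2 w y) = b)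

def Fam (v : Fin (s+1) → Fin n) : Finset (Finset (Fin 3)) :=
  Finset.univ.filter (fun S => ∃ y : Fin n, y ≠ v ⟨s, by omega⟩ ∧ S ⊆ Img B (ext1 v y))

lemma mem_Img_iff {w : Fin (s+2) → Fin n} {b : Fin 3} :
    b ∈ Img B w ↔ ∃ y : Fin n, y ≠ w ⟨s+1, by omega⟩ ∧ B (ext2 w y) = b := by
  simp [Img]

lemma mem_Fam_iff {v : Fin (s+1) → Fin n} {S : Finset (Fin 3)} :
    S ∈ Fam B v ↔ ∃ y : Fin n, y ≠ v ⟨s, by omega⟩ ∧ S ⊆ Img B (ext1 v y) := by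
  simp [Fam]

lemma hB' (hB : IsOneSided n 3 (s+2) B) :
    ∀ z : Fin (s+4) → Fin n,
      (∀ j : ℕ, ∀ h : j + 1 < s + 4, z ⟨j, by omega⟩ ≠ z ⟨j+1, h⟩) →
      B (fun i : Fin (s+3) => z ⟨i.1, by omega⟩) ≠ B (fun i : Fin (s+3) => z ⟨i.1+1, by omega⟩) := by
  intro z hz
  have h := hB z (fun i => hz i.1 (by omega))
  have e1 : (fun i : Fin (s+3) => z i.castSucc) = (fun i : Fin (s+3) => z ⟨i.1, by omega⟩) := by
    funext i; congr 1
  have e2 : (fun i : Fin (s+3) => z i.succ) = (fun i : Fin (s+3) => z ⟨i.1+1, by omega⟩) := by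
    funext i; congr 1
  rw [e1, e2] at h
  exact h

/-- adjacent-distinct in val form -/
def Adj (m : ℕ) (w : Fin m → Fin n) : Prop :=
  ∀ j : ℕ, ∀ h : j + 1 < m, w ⟨j, by omega⟩ ≠ w ⟨j+1, h⟩

lemma wcong {m : ℕ} (w : Fin m → Fin n) {a b : ℕ} (ha : a < m) (hb : b < m) (hab : a = b) :
    w ⟨a, ha⟩ = w ⟨b, hb⟩ := by subst hab; rfl

lemma adj_ne {m : ℕ} {w : Fin m → Fin n} (hw : Adj m w) {a b : ℕ} (ha : a < m) (hb : b < m)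
    (hab : b = a + 1) : w ⟨a, ha⟩ ≠ w ⟨b, hb⟩ := by
  subst hab; exact hw a hb

lemma Img_ne_univ (hB : IsOneSided n 3 (s+2) B) (hn : 2 ≤ n) (w : Fin (s+2) → Fin n)
    (hw : Adj (s+2) w) : Img B w ≠ Finset.univ := by
  have hnt : Nontrivial (Fin n) := ⟨⟨⟨0, by omega⟩, ⟨1, by omega⟩, by simp [Fin.ext_iff]⟩⟩
  obtain ⟨x₀, hx₀⟩ := exists_ne (w ⟨0, by omega⟩)
  intro hu
  have hmem : B (fun i : Fin (s+3) =>
      if h : (i : ℕ) < 1 then x₀ else w ⟨i.1 - 1, by omega⟩) ∈ Img B w :=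
    hu ▸ Finset.mem_univ _
  rw [mem_Img_iff] at hmem
  obtain ⟨y, hy, heq⟩ := hmem
  set z : Fin (s+4) → Fin n := fun i =>
    if (i : ℕ) < 1 then x₀ else if h : i.1 - 1 < s+2 then w ⟨i.1 - 1, h⟩ else y with hzdef
  have hadj : ∀ j : ℕ, ∀ h : j + 1 < s + 4, z ⟨j, by omega⟩ ≠ z ⟨j+1, h⟩ := by
    intro j h
    simp only [hzdef]
    split_ifs with h1 h2 h2 h3 h3 <;> first
      | omega
      | (exact fun hc => hx₀ (hc.trans (wcong w _ _ (by omega))))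
      | (exact adj_ne hw _ _ (by omega))
      | (exact fun hc => hy (hc.symm.trans (wcong w _ _ (by omega))))
  have hkey := hB' B hB z hadj
  have e1 : (fun i : Fin (s+3) => z ⟨i.1, by omega⟩) =
      (fun i : Fin (s+3) => if h : (i : ℕ) < 1 then x₀ else w ⟨i.1 - 1, by omega⟩) := by
    funext i; simp only [hzdef]; split_ifs <;> first | rfl | omega
  have e2 : (fun i : Fin (s+3) => z ⟨i.1+1, by omega⟩) = ext2 w y := by
    funext i; simp only [hzdef, ext2]; split_ifs <;>
      first | omega | rfl | (exact wcong w _ _ (by omega))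
  rw [e1, e2, heq] at hkey
  exact hkey rfl

end CRaux

namespace CRaux
variable {n s : ℕ} (B : (Fin (s+3) → Fin n) → Fin 3)

def tl (x : Fin (s+2) → Fin n) : Fin (s+1) → Fin n := fun i => x ⟨i.1 + 1, by omega⟩
def hd (x : Fin (s+2) → Fin n) : Fin (s+1) → Fin n := fun i => x ⟨i.1, by omega⟩

lemma Img_notMem_Fam_tl (hB : IsOneSided n 3 (s+2) B) (x : Fin (s+2) → Fin n)
    (hx : Adj (s+2) x) : Img B x ∉ Fam B (tl x) := by
  rw [mem_Fam_iff]
  rintro ⟨y, hy, hsub⟩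
  -- hy : y ≠ tl x ⟨s, _⟩ = x ⟨s+1⟩
  have hy' : y ≠ x ⟨s+1, by omega⟩ := hy
  have hbmem : B (ext2 x y) ∈ Img B x := (mem_Img_iff B).2 ⟨y, hy', rfl⟩
  have hbmem2 := hsub hbmem
  rw [mem_Img_iff] at hbmem2
  obtain ⟨u, hu, hequ⟩ := hbmem2
  have hu' : u ≠ y := by
    have : ext1 (tl x) y ⟨s+1, by omega⟩ = y := by
      simp only [ext1]; split_ifs <;> first | omega | rfl
    rwa [this] at hu
  set z : Fin (s+4) → Fin n := fun i =>
    if h : (i : ℕ) < s+2 then x ⟨i.1, h⟩ else if (i : ℕ) = s+2 then y else u with hzdef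
  have hadj : ∀ j : ℕ, ∀ h : j + 1 < s + 4, z ⟨j, by omega⟩ ≠ z ⟨j+1, h⟩ := by
    intro j h
    simp only [hzdef]
    split_ifs <;> first
      | omega
      | (exact adj_ne hx _ _ (by omega))
      | (exact fun hc => hy' (hc.symm.trans (wcong x _ _ (by omega))))
      | (exact fun hc => hu' (hc.symm))
  have hkey := hB' B hB z hadj
  have e1 : (fun i : Fin (s+3) => z ⟨i.1, by omega⟩) = ext2 x y := by
    funext i; simp only [hzdef, ext2]; split_ifs <;> first | omega | rfl
  have e2 : (fun i : Fin (s+3) => z ⟨i.1+1, by omega⟩) = ext2 (ext1 (tl x) y) u := by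
    funext i; simp only [hzdef, ext2, ext1, tl]; split_ifs <;>
      first | omega | rfl | (exact wcong x _ _ (by omega))
  rw [e1, e2, hequ] at hkey
  exact hkey rfl

lemma Img_mem_Fam_hd (x : Fin (s+2) → Fin n) (hx : Adj (s+2) x) :
    Img B x ∈ Fam B (hd x) := by
  rw [mem_Fam_iff]
  refine ⟨x ⟨s+1, by omega⟩, ?_, ?_⟩
  · exact (adj_ne hx _ _ (by simp)).symm
  · have : ext1 (hd x) (x ⟨s+1, by omega⟩) = x := by
      funext i; simp only [ext1, hd]; split_ifs with h
      · exact wcong x _ _ (by simp)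
      · exact wcong x _ _ (by have := i.isLt; omega)
    rw [this]

end CRaux

namespace CRaux
variable {n s : ℕ} (B : (Fin (s+3) → Fin n) → Fin 3)

def GoodF (F : Finset (Finset (Fin 3))) : Prop :=
  (∀ S ∈ F, ∀ S' ⊆ S, S' ∈ F) ∧ ∅ ∈ F ∧ Finset.univ ∉ F ∧ (∃ S ∈ F, S ≠ ∅) ∧
    F ≠ Finset.univ.filter (fun S => S ≠ Finset.univ)

instance : DecidablePred GoodF := fun F => by unfold GoodF; infer_instance

def D16 : Finset (Finset (Finset (Fin 3))) := Finset.univ.filter GoodF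

lemma D16card : D16.card = 16 := by decide

lemma exists_ne' (hn : 2 ≤ n) (a : Fin n) : ∃ b : Fin n, b ≠ a := by
  have hnt : Nontrivial (Fin n) := ⟨⟨⟨0, by omega⟩, ⟨1, by omega⟩, by simp [Fin.ext_iff]⟩⟩
  exact exists_ne a

lemma Fam_good (hB : IsOneSided n 3 (s+2) B) (hn : 2 ≤ n) (v : Fin (s+1) → Fin n)
    (hv : Adj (s+1) v) : GoodF (Fam B v) := by
  obtain ⟨y₀, hy₀⟩ := exists_ne' hn (v ⟨s, by omega⟩)
  have hadj_ext : ∀ y : Fin n, y ≠ v ⟨s, by omega⟩ → Adj (s+2) (ext1 v y) := by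
    intro y hy j h
    simp only [ext1]
    split_ifs <;> first
      | omega
      | (exact adj_ne hv _ _ (by omega))
      | (exact fun hc => hy (hc.symm.trans (wcong v _ _ (by omega))))
  refine ⟨?_, ?_, ?_, ?_, ?_⟩
  · -- downward closed
    intro S hS S' hS'
    rw [mem_Fam_iff] at hS ⊢
    obtain ⟨y, hy, hsub⟩ := hS
    exact ⟨y, hy, hS'.trans hsub⟩
  · exact (mem_Fam_iff B).2 ⟨y₀, hy₀, Finset.empty_subset _⟩
  · -- univ not mem
    rw [mem_Fam_iff]
    rintro ⟨y, hy, hsub⟩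
    exact Img_ne_univ B hB hn _ (hadj_ext y hy)
      (Finset.univ_subset_iff.1 hsub)
  · -- some nonempty member
    refine ⟨Img B (ext1 v y₀), (mem_Fam_iff B).2 ⟨y₀, hy₀, le_refl _⟩, ?_⟩
    obtain ⟨y₁, hy₁⟩ := exists_ne' hn (ext1 v y₀ ⟨s+1, by omega⟩)
    have : B (ext2 (ext1 v y₀) y₁) ∈ Img B (ext1 v y₀) := (mem_Img_iff B).2 ⟨y₁, hy₁, rfl⟩
    exact Finset.ne_empty_of_mem this
  · -- not the full family
    obtain ⟨x₀, hx₀⟩ := exists_ne' hn (v ⟨0, by omega⟩)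
    set x : Fin (s+2) → Fin n := fun i =>
      if h : (i : ℕ) < 1 then x₀ else v ⟨i.1 - 1, by omega⟩ with hxdef
    have hxadj : Adj (s+2) x := by
      intro j h
      simp only [hxdef]
      split_ifs <;> first
        | omega
        | (exact fun hc => hx₀ (hc.trans (wcong v _ _ (by omega))))
        | (exact adj_ne hv _ _ (by omega))
    have htl : tl x = v := by
      funext i
      simp only [tl, hxdef]
      split_ifs <;> first | omega | (exact wcong v _ _ (by have := i.isLt; omega))
    intro hcontra
    have h1 : Img B x ∉ Fam B v := htl ▸ Img_notMem_Fam_tl B hB x hxadj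
    have h2 : Img B x ≠ Finset.univ := Img_ne_univ B hB hn x hxadj
    rw [hcontra] at h1
    exact h1 (Finset.mem_filter.2 ⟨Finset.mem_univ _, h2⟩)

noncomputable def psi (F : Finset (Finset (Fin 3))) : Fin 16 :=
  if h : F ∈ D16 then Fin.cast D16card (D16.equivFin ⟨F, h⟩) else 0

lemma psi_inj {F₁ F₂ : Finset (Finset (Fin 3))} (h₁ : F₁ ∈ D16) (h₂ : F₂ ∈ D16)
    (h : psi F₁ = psi F₂) : F₁ = F₂ := by
  simp only [psi, dif_pos h₁, dif_pos h₂] at h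
  have := D16.equivFin.injective (Fin.cast_injective _ h)
  exact Subtype.ext_iff.1 this

lemma speedup (hB : IsOneSided n 3 (s+2) B) (hn : 2 ≤ n) :
    ∃ B' : (Fin (s+1) → Fin n) → Fin 16, IsOneSided n 16 s B' := by
  refine ⟨fun v => psi (Fam B v), ?_⟩
  intro x hx
  have hx' : Adj (s+2) x := by
    intro j h
    have := hx ⟨j, by omega⟩
    convert this using 2 <;> simp [Fin.ext_iff]
  have hhd : (fun i : Fin (s+1) => x i.castSucc) = hd x := by
    funext i; exact wcong x _ _ (by simp)
  have htl2 : (fun i : Fin (s+1) => x i.succ) = tl x := by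
    funext i; exact wcong x _ _ (by simp)
  rw [hhd, htl2]
  intro hcontra
  have hadjhd : Adj (s+1) (hd x) := by
    intro j h; exact adj_ne hx' (a := j) (b := j+1) (by omega) (by omega) rfl
  have hadjtl : Adj (s+1) (tl x) := by
    intro j h; exact adj_ne hx' (a := j+1) (b := j+2) (by omega) (by omega) rfl
  have heq : Fam B (hd x) = Fam B (tl x) :=
    psi_inj (Finset.mem_filter.2 ⟨Finset.mem_univ _, Fam_good B hB hn _ hadjhd⟩)
      (Finset.mem_filter.2 ⟨Finset.mem_univ _, Fam_good B hB hn _ hadjtl⟩) hcontra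
  exact Img_notMem_Fam_tl B hB x hx' (heq ▸ Img_mem_Fam_hd B x hx')

end CRaux

namespace CRaux

lemma pad {m c t : ℕ} {B : (Fin (t+1) → Fin m) → Fin c} (hB : IsOneSided m c t B) :
    ∃ B' : (Fin (t+2) → Fin m) → Fin c, IsOneSided m c (t+1) B' := by
  refine ⟨fun w => B (fun i => w ⟨i.1, by omega⟩), ?_⟩
  intro x hx
  have h := hB (fun i : Fin (t+2) => x ⟨i.1, by omega⟩) ?h1
  case h1 =>
    intro i
    have := hx ⟨i.1, by omega⟩
    convert this using 2 <;> simp [Fin.ext_iff]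
  convert h using 2 <;> (funext i; apply congrArg; simp [Fin.ext_iff])

lemma comp {m₀ m c t₁ t₂ : ℕ} {B₁ : (Fin (t₁+1) → Fin m₀) → Fin m}
    {B₂ : (Fin (t₂+1) → Fin m) → Fin c} (h₁ : IsOneSided m₀ m t₁ B₁)
    (h₂ : IsOneSided m c t₂ B₂) :
    ∃ B₃ : (Fin (t₁+t₂+1) → Fin m₀) → Fin c, IsOneSided m₀ c (t₁+t₂) B₃ := by
  refine ⟨fun w => B₂ (fun j => B₁ (fun i => w ⟨i.1 + j.1, by omega⟩)), ?_⟩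
  intro x hx
  have hxv : ∀ a b : ℕ, ∀ ha : a < t₁+t₂+2, ∀ hb : b < t₁+t₂+2, b = a + 1 →
      x ⟨a, ha⟩ ≠ x ⟨b, hb⟩ := by
    intro a b ha hb hab
    subst hab
    have := hx ⟨a, by omega⟩
    convert this using 2 <;> simp [Fin.ext_iff]
  set y : Fin (t₂+2) → Fin m := fun j => B₁ (fun i : Fin (t₁+1) => x ⟨i.1 + j.1, by omega⟩)
    with hydef
  have hy : ∀ j : Fin (t₂+1), y j.castSucc ≠ y j.succ := by
    intro j
    have h := h₁ (fun i' : Fin (t₁+2) => x ⟨i'.1 + j.1, by omega⟩)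
      (fun i => hxv _ _ _ _ (by simp only [Fin.val_succ, Fin.coe_castSucc]; omega))
    have e1 : (fun i : Fin (t₁+1) =>
        x ⟨((i.castSucc : Fin (t₁+2)) : ℕ) + j.1, by omega⟩) =
        (fun i : Fin (t₁+1) => x ⟨i.1 + ((j.castSucc : Fin (t₂+2)) : ℕ), by omega⟩) := by
      funext i; apply congrArg; exact Fin.ext (by simp)
    have e2 : (fun i : Fin (t₁+1) =>
        x ⟨((i.succ : Fin (t₁+2)) : ℕ) + j.1, by omega⟩) =
        (fun i : Fin (t₁+1) => x ⟨i.1 + ((j.succ : Fin (t₂+2)) : ℕ), by omega⟩) := by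
      funext i; apply congrArg
      exact Fin.ext (by simp only [Fin.val_succ, Fin.val_mk]; omega)
    rw [e1, e2] at h
    exact h
  have h := h₂ y hy
  have E1 : (fun j : Fin (t₂+1) => y j.castSucc) =
      (fun j : Fin (t₂+1) => B₁ (fun i : Fin (t₁+1) =>
        (fun i' : Fin (t₁+t₂+1) => x i'.castSucc) ⟨i.1 + j.1, by omega⟩)) := by
    funext j; simp only [hydef]; apply congrArg; funext i; apply congrArg
    exact Fin.ext (by simp)
  have E2 : (fun j : Fin (t₂+1) => y j.succ) =
      (fun j : Fin (t₂+1) => B₁ (fun i : Fin (t₁+1) =>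
        (fun i' : Fin (t₁+t₂+1) => x i'.succ) ⟨i.1 + j.1, by omega⟩)) := by
    funext j; simp only [hydef]; apply congrArg; funext i; apply congrArg
    exact Fin.ext (by simp only [Fin.val_succ, Fin.val_mk]; omega)
  rw [E1, E2] at h
  exact h

lemma sperner_step {m k : ℕ} (hk : 0 < k) (S : Fin m → Finset (Fin k))
    (hS : ∀ a b : Fin m, a ≠ b → ¬ S a ⊆ S b) :
    ∃ B : (Fin 2 → Fin m) → Fin k, IsOneSided m k 1 B := by
  classical
  refine ⟨fun w => if h : (S (w 0) \ S (w 1)).Nonempty then h.choose else ⟨0, hk⟩, ?_⟩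
  intro x hx
  have h01 : x 0 ≠ x 1 := by
    have := hx 0; convert this using 2 <;> simp [Fin.ext_iff]
  have h12 : x 1 ≠ x 2 := by
    have := hx 1; convert this using 2 <;> simp [Fin.ext_iff]
  have e0 : (fun i : Fin 2 => x i.castSucc) 0 = x 0 := by apply congrArg; simp [Fin.ext_iff]
  have e1 : (fun i : Fin 2 => x i.castSucc) 1 = x 1 := by apply congrArg; simp [Fin.ext_iff]
  have f0 : (fun i : Fin 2 => x i.succ) 0 = x 1 := by apply congrArg; simp [Fin.ext_iff]
  have f1 : (fun i : Fin 2 => x i.succ) 1 = x 2 := by apply congrArg; simp [Fin.ext_iff]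
  simp only [e0, e1, f0, f1]
  have hne1 : (S (x 0) \ S (x 1)).Nonempty := by
    rw [Finset.sdiff_nonempty]; exact hS _ _ h01
  have hne2 : (S (x 1) \ S (x 2)).Nonempty := by
    rw [Finset.sdiff_nonempty]; exact hS _ _ h12
  rw [dif_pos hne1, dif_pos hne2]
  have hm1 := hne1.choose_spec
  have hm2 := hne2.choose_spec
  rw [Finset.mem_sdiff] at hm1 hm2
  intro hcontra
  exact hm1.2 (hcontra ▸ hm2.1)

end CRaux

namespace CRaux

lemma reduce_one {m : ℕ} (hm : 5 ≤ m) :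
    ∃ B : (Fin 2 → Fin m) → Fin (m-1), IsOneSided m (m-1) 1 B := by
  classical
  have hmid : m ≤ (m-1).choose ((m-1)/2) := by
    have h1 : (m-1).choose 2 ≤ (m-1).choose ((m-1)/2) := Nat.choose_le_middle 2 (m-1)
    have h2 : (m-1).choose 2 = (m-1) * ((m-1) - 1) / 2 := Nat.choose_two_right (m-1)
    have h3 : 2 * m ≤ (m-1) * ((m-1) - 1) := by
      obtain ⟨k, rfl⟩ := Nat.exists_eq_add_of_le hm
      have e1 : 5 + k - 1 = 4 + k := by omega
      rw [e1]
      have e2 : 4 + k - 1 = 3 + k := by omega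
      rw [e2]
      nlinarith
    omega
  have hemb : Nonempty (Fin m ↪
      {x : Finset (Fin (m-1)) // x ∈ Finset.univ.powersetCard ((m-1)/2)}) := by
    apply Function.Embedding.nonempty_of_card_le
    rw [Fintype.card_fin, Fintype.card_coe, Finset.card_powersetCard, Finset.card_univ,
      Fintype.card_fin]
    exact hmid
  obtain ⟨ι⟩ := hemb
  have hcardS : ∀ a : Fin m, ((ι a).1).card = (m-1)/2 :=
    fun a => (Finset.mem_powersetCard.1 (ι a).2).2
  have hSprop : ∀ a b : Fin m, a ≠ b → ¬ (ι a).1 ⊆ (ι b).1 := by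
    intro a b hab hsub
    have heq : (ι a).1 = (ι b).1 :=
      Finset.eq_of_subset_of_card_le hsub (by rw [hcardS, hcardS])
    exact hab (ι.injective (Subtype.ext heq))
  exact sperner_step (by omega) (fun a => (ι a).1) hSprop

lemma embed {m m' c t : ℕ} (h : m ≤ m') {B : (Fin (t+1) → Fin m') → Fin c}
    (hB : IsOneSided m' c t B) :
    ∃ B' : (Fin (t+1) → Fin m) → Fin c, IsOneSided m c t B' := by
  refine ⟨fun w => B (fun i => Fin.castLE h (w i)), ?_⟩
  intro x hx
  exact hB (fun i => Fin.castLE h (x i))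
    (fun i hc => hx i (Fin.castLE_injective h hc))

def Nbase : ℕ := 3146320382890737023176813776
def B43 : (Fin 3 → Fin 4) → Fin 3 :=
  fun w => ⟨Nbase / 3 ^ ((w 0).1 * 16 + (w 1).1 * 4 + (w 2).1) % 3, Nat.mod_lt _ (by norm_num)⟩
lemma hB43 : IsOneSided 4 3 2 B43 := by unfold IsOneSided; decide

lemma exists3 : ∀ m : ℕ, ∃ t : ℕ, ∃ B : (Fin (t+1) → Fin m) → Fin 3, IsOneSided m 3 t B := by
  intro m
  induction m using Nat.strong_induction_on with
  | _ m ih =>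
    rcases le_or_gt m 4 with hm | hm
    · obtain ⟨B', hB'⟩ := embed hm hB43
      exact ⟨2, B', hB'⟩
    · obtain ⟨B₁, hB₁⟩ := reduce_one (m := m) (by omega)
      obtain ⟨t', B₂, hB₂⟩ := ih (m-1) (by omega)
      obtain ⟨B₃, hB₃⟩ := comp hB₁ hB₂
      exact ⟨1 + t', B₃, hB₃⟩

end CRaux


/-- For every `n ≥ 16` and `t ≥ 2`, a one-sided algorithm from `n` colours to `3`
colours in `t` rounds yields a one-sided algorithm from `n` colours to `16` colours
in `t − 2` rounds. Consequently `T(n,16) ≤ T(n,3) − 2`. -/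
theorem stmt_16 (n : ℕ) (hn : 16 ≤ n) :
    (∀ t : ℕ, 2 ≤ t → (∃ B, IsOneSided n 3 t B) →
      ∃ B', IsOneSided n 16 (t - 2) B') ∧
    T n 16 ≤ T n 3 - 2 := by
  have key : ∀ t : ℕ, 2 ≤ t → (∃ B, IsOneSided n 3 t B) →
      ∃ B', IsOneSided n 16 (t - 2) B' := by
    intro t ht hex
    obtain ⟨s, rfl⟩ : ∃ s, t = s + 2 := ⟨t - 2, by omega⟩
    obtain ⟨B, hB⟩ := hex
    have hsub : s + 2 - 2 = s := by omega
    rw [hsub]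
    exact CRaux.speedup B hB (by omega)
  refine ⟨key, ?_⟩
  have h3 : {t | ∃ B, IsOneSided n 3 t B}.Nonempty := by
    obtain ⟨t, B, hB⟩ := CRaux.exists3 n
    exact ⟨t, B, hB⟩
  have hmem : (∃ B, IsOneSided n 3 (T n 3) B) := Nat.sInf_mem h3
  have hup : ∀ a b : ℕ, a ≤ b → (∃ B, IsOneSided n 3 a B) → (∃ B, IsOneSided n 3 b B) := by
    intro a b hab
    induction b, hab using Nat.le_induction with
    | base => exact id
    | succ b hb ih =>
      intro h
      obtain ⟨B, hB⟩ := ih h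
      exact CRaux.pad hB
  have h2 : ∃ B, IsOneSided n 3 (max (T n 3) 2) B :=
    hup _ _ (le_max_left _ _) hmem
  have h16 : ∃ B', IsOneSided n 16 (max (T n 3) 2 - 2) B' :=
    key _ (le_max_right _ _) h2
  have hle : T n 16 ≤ max (T n 3) 2 - 2 := Nat.sInf_le h16
  have : max (T n 3) 2 - 2 = T n 3 - 2 := by
    rcases le_total (T n 3) 2 with h | h
    · rw [max_eq_right h]; omega
    · rw [max_eq_left h]
  omega
end
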